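/- arXiv:1001.5104 — 3 statements merged into one kernel-verified Lean document; each statement's English description precedes it below -/
import Mathlib

section
/- Let [x,y] be a length-2 interval in R_n, let x < x_1 < y be the chain with lexicographically smallest label sequence under the labeling F, and let x < x_1' < y be any other maximal chain in [x,y]. Then F(x, x_1') = F(x_1, y) or F(x_1', y) = F(x, x_1). -/
open Finset

variable {n : ℕ}

/-- An element of the rook monoid `R_n` in one-line notation: a sequence of
entries in `{0,...,n}` whose nonzero entries are pairwise distinct. -/
def IsRook (n : ℕ) (a : Fin n → ℕ) : Prop :=
  (∀ i, a i ≤ n) ∧ ∀ i j, a i ≠ 0 → a i = a j → i = j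

/-- number of inversions -/
def rinv (a : Fin n → ℕ) : ℕ :=
  ((univ ×ˢ univ).filter fun p : Fin n × Fin n => p.1 < p.2 ∧ a p.2 < a p.1).card

/-- number of coinversion pairs -/
def rcoinv (a : Fin n → ℕ) : ℕ :=
  ((univ ×ˢ univ).filter fun p : Fin n × Fin n => p.1 < p.2 ∧ 0 < a p.1 ∧ a p.1 < a p.2).card

/-- the length function ℓ -/
def rlen (a : Fin n → ℕ) : ℕ := (∑ i, a i) + rinv a

/-- type 1 generating relation: increase a single entry -/
def Step1 (a b : Fin n → ℕ) : Prop := ∃ i, a i < b i ∧ ∀ j, j ≠ i → a j = b j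

/-- type 2 generating relation: swap two entries, larger one first -/
def Step2 (a b : Fin n → ℕ) : Prop :=
  ∃ i j, i < j ∧ a i < a j ∧ b i = a j ∧ b j = a i ∧ ∀ k, k ≠ i → k ≠ j → a k = b k

/-- the Bruhat-Chevalley-Renner order on `R_n` -/
def RookLe (n : ℕ) (a b : Fin n → ℕ) : Prop :=
  Relation.ReflTransGen (fun x y => IsRook n x ∧ IsRook n y ∧ (Step1 x y ∨ Step2 x y)) a b

def RookLt (n : ℕ) (a b : Fin n → ℕ) : Prop := RookLe n a b ∧ a ≠ b

/-- covering relation of the Bruhat-Chevalley-Renner order -/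
def RookCov (n : ℕ) (a b : Fin n → ℕ) : Prop :=
  RookLt n a b ∧ ∀ z, RookLt n a z → RookLt n z b → False

/-- the edge labeling `F` on covering relations -/
noncomputable def Flabel (a b : Fin n → ℕ) : ℕ × ℕ := by
  classical
  exact if h : ∃ i, a i < b i ∧ ∀ j, j ≠ i → a j = b j then (a h.choose, b h.choose)
  else if h2 : ∃ p : Fin n × Fin n, p.1 < p.2 ∧ a p.1 < a p.2 ∧ b p.1 = a p.2 ∧ b p.2 = a p.1 ∧
      ∀ k, k ≠ p.1 → k ≠ p.2 → a k = b k then (a h2.choose.1, a h2.choose.2)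
  else (0, 0)

/-- lexicographic (strict) order on labels -/
def pairLt (p q : ℕ × ℕ) : Prop := p.1 < q.1 ∨ (p.1 = q.1 ∧ p.2 < q.2)

def pairLe (p q : ℕ × ℕ) : Prop := p = q ∨ pairLt p q

/-- lexicographic comparison of label sequences -/
def lexLe (l m : List (ℕ × ℕ)) : Prop := l = m ∨ List.Lex pairLt l m

/-- the Jordan-Hölder sequence of labels of a chain -/
noncomputable def labels (c : List (Fin n → ℕ)) : List (ℕ × ℕ) :=
  List.zipWith Flabel c c.tail

/-- a maximal chain in the interval `[x,y]` -/
def RookMaxChain (n : ℕ) (x y : Fin n → ℕ) (c : List (Fin n → ℕ)) : Prop :=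
  c.Chain' (RookCov n) ∧ c.head? = some x ∧ c.getLast? = some y

section Aux
variable {n : ℕ}

lemma step1_ne {a b : Fin n → ℕ} (h : Step1 a b) : a ≠ b := by
  obtain ⟨i, hi, -⟩ := h
  intro he; rw [he] at hi; exact lt_irrefl _ hi

lemma step2_ne {a b : Fin n → ℕ} (h : Step2 a b) : a ≠ b := by
  obtain ⟨i, j, hij, hv, e1, e2, -⟩ := h
  intro he; rw [he] at hv e1; omega

lemma step_ne {a b : Fin n → ℕ} (h : Step1 a b ∨ Step2 a b) : a ≠ b :=
  h.elim step1_ne step2_ne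

lemma step2_not_step1 {a b : Fin n → ℕ} (h : Step2 a b) : ¬ Step1 a b := by
  obtain ⟨i, j, hij, hv, e1, e2, -⟩ := h
  rintro ⟨k, hk, hall⟩
  by_cases hik : i = k
  · by_cases hjk : j = k
    · exact absurd (hik.trans hjk.symm) (ne_of_lt hij)
    · have := hall j hjk; omega
  · have := hall i hik; omega

lemma cover_step {x z : Fin n → ℕ} (h : RookCov n x z) :
    IsRook n x ∧ IsRook n z ∧ (Step1 x z ∨ Step2 x z) := by
  obtain ⟨⟨hle, hne⟩, hmin⟩ := h
  rcases Relation.ReflTransGen.cases_head hle with rfl | ⟨w, hw, hwz⟩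
  · exact absurd rfl hne
  · by_cases hwz' : w = z
    · subst hwz'; exact hw
    · exact absurd trivial
        (fun _ => hmin w ⟨Relation.ReflTransGen.single hw, step_ne hw.2.2⟩ ⟨hwz, hwz'⟩)

lemma rookLt_of_step {x z : Fin n → ℕ} (hx : IsRook n x) (hz : IsRook n z)
    (h : Step1 x z ∨ Step2 x z) : RookLt n x z :=
  ⟨Relation.ReflTransGen.single ⟨hx, hz, h⟩, step_ne h⟩

lemma flabel_step1 {a b : Fin n → ℕ} (i : Fin n) (hi : a i < b i)
    (ho : ∀ j, j ≠ i → a j = b j) : Flabel a b = (a i, b i) := by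
  have h : ∃ i, a i < b i ∧ ∀ j, j ≠ i → a j = b j := ⟨i, hi, ho⟩
  have hc := h.choose_spec
  have he : h.choose = i := by
    by_contra hne
    have := ho h.choose hne
    omega
  unfold Flabel
  rw [dif_pos h, he]

lemma flabel_step2 {a b : Fin n → ℕ} (i j : Fin n) (hij : i < j) (hv : a i < a j)
    (e1 : b i = a j) (e2 : b j = a i)
    (ho : ∀ k, k ≠ i → k ≠ j → a k = b k) : Flabel a b = (a i, a j) := by
  have h2 : ∃ p : Fin n × Fin n, p.1 < p.2 ∧ a p.1 < a p.2 ∧ b p.1 = a p.2 ∧ b p.2 = a p.1 ∧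
      ∀ k, k ≠ p.1 → k ≠ p.2 → a k = b k := ⟨(i, j), hij, hv, e1, e2, ho⟩
  have hn1 : ¬ ∃ i, a i < b i ∧ ∀ j, j ≠ i → a j = b j :=
    step2_not_step1 ⟨i, j, hij, hv, e1, e2, ho⟩
  obtain ⟨hp1, hp2, hp3, hp4, hp5⟩ := h2.choose_spec
  have h1i : h2.choose.1 = i ∨ h2.choose.1 = j := by
    by_contra hcon
    push_neg at hcon
    have := ho _ hcon.1 hcon.2
    omega
  have h2i : h2.choose.2 = i ∨ h2.choose.2 = j := by
    by_contra hcon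
    push_neg at hcon
    have := ho _ hcon.1 hcon.2
    omega
  have hii : ¬ h2.choose.1 = j := by
    intro he
    rcases h2i with he2 | he2
    · rw [he, he2] at hp1; exact absurd hij (lt_asymm hp1)
    · rw [he, he2] at hp1; exact lt_irrefl _ hp1
  have he1 : h2.choose.1 = i := h1i.resolve_right hii
  have he2 : h2.choose.2 = j := by
    rcases h2i with he2 | he2
    · rw [he1, he2] at hp1; exact absurd hp1 (lt_irrefl _)
    · exact he2
  unfold Flabel
  rw [dif_neg hn1, dif_pos h2, he1, he2]

end Aux
section Aux2
variable {n : ℕ}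

/-- number of positions with value `w` -/
def cnt (a : Fin n → ℕ) (w : ℕ) : ℕ := (univ.filter fun k => a k = w).card

lemma cnt_eq_sum (a : Fin n → ℕ) (w : ℕ) :
    cnt a w = ∑ k, (if a k = w then 1 else 0) := by
  rw [cnt, Finset.card_filter]

lemma cnt_step1 {x z : Fin n → ℕ} (i : Fin n) (ho : ∀ j, j ≠ i → x j = z j) (w : ℕ) :
    cnt z w + (if x i = w then 1 else 0) = cnt x w + (if z i = w then 1 else 0) := by
  rw [cnt_eq_sum, cnt_eq_sum,
    ← Finset.sum_erase_add _ _ (Finset.mem_univ i),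
    ← Finset.sum_erase_add _ _ (Finset.mem_univ i)]
  have hs : (∑ k ∈ Finset.univ.erase i, (if z k = w then 1 else 0)) =
      ∑ k ∈ Finset.univ.erase i, (if x k = w then 1 else 0) :=
    Finset.sum_congr rfl (fun k hk => by rw [ho k (Finset.ne_of_mem_erase hk)])
  rw [hs]; ring

lemma cnt_step2 {x z : Fin n → ℕ} (i j : Fin n) (hij : i ≠ j)
    (e1 : z i = x j) (e2 : z j = x i)
    (ho : ∀ k, k ≠ i → k ≠ j → x k = z k) (w : ℕ) : cnt z w = cnt x w := by
  have hmem : i ∈ Finset.univ.erase j := Finset.mem_erase.2 ⟨hij, Finset.mem_univ i⟩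
  rw [cnt_eq_sum, cnt_eq_sum,
    ← Finset.sum_erase_add _ _ (Finset.mem_univ j),
    ← Finset.sum_erase_add _ _ (Finset.mem_univ j),
    ← Finset.sum_erase_add _ _ hmem, ← Finset.sum_erase_add _ _ hmem]
  have hs : (∑ k ∈ (Finset.univ.erase j).erase i, (if z k = w then 1 else 0)) =
      ∑ k ∈ (Finset.univ.erase j).erase i, (if x k = w then 1 else 0) := by
    refine Finset.sum_congr rfl (fun k hk => ?_)
    have h1 := Finset.ne_of_mem_erase hk
    have h2 := Finset.ne_of_mem_erase (Finset.mem_of_mem_erase hk)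
    rw [ho k h1 h2]
  rw [hs, e1, e2]; ring

/-- updating one entry with a completely fresh value preserves rookness -/
lemma rook_update {x : Fin n → ℕ} (hx : IsRook n x) (c : Fin n) {v : ℕ}
    (hv : v ≤ n) (hfresh : ∀ k, x k ≠ v) :
    IsRook n (fun k => if k = c then v else x k) := by
  constructor
  · intro k
    by_cases h : k = c <;> simp [h, hv, hx.1 k]
  · intro k l hnz he
    simp only at hnz he
    by_cases hk : k = c <;> by_cases hl : l = c
    · rw [hk, hl]
    · rw [if_pos hk, if_neg hl] at he
      exact absurd he.symm (hfresh l)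
    · rw [if_neg hk, if_pos hl] at he
      exact absurd he (hfresh k)
    · rw [if_neg hk, if_neg hl] at he
      rw [if_neg hk] at hnz
      exact hx.2 k l hnz he

/-- swapping two entries preserves rookness -/
lemma rook_swap {z : Fin n → ℕ} (hz : IsRook n z) (i j : Fin n) :
    IsRook n (fun k => if k = i then z j else if k = j then z i else z k) := by
  have he : (fun k => if k = i then z j else if k = j then z i else z k)
      = z ∘ (Equiv.swap i j) := by
    funext k
    simp only [Function.comp_apply, Equiv.swap_apply_def]
    split_ifs <;> rfl
  rw [he]
  exact ⟨fun k => hz.1 _, fun k l hnz heq => (Equiv.swap i j).injective (hz.2 _ _ hnz heq)⟩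

end Aux2
section Cycles
variable {n : ℕ}

/-- partner factorizations of a 3-cycle composite, orientation 1 -/
lemma cycle1_partner {x z' y : Fin n → ℕ} (hx : IsRook n x)
    (α β γ : Fin n) (hab : α < β) (hbc : β < γ)
    (hyα : y α = x β) (hyβ : y β = x γ) (hyγ : y γ = x α)
    (hne1 : x α ≠ x β) (hne2 : x β ≠ x γ) (hne3 : x γ ≠ x α)
    (hout : ∀ k, k ≠ α → k ≠ β → k ≠ γ → x k = y k)
    (p q : Fin n) (hpq : p < q) (hplt : x p < x q) (hp1 : z' p = x q) (hp2 : z' q = x p)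
    (hs'o : ∀ k, k ≠ p → k ≠ q → x k = z' k)
    (d e : Fin n) (hde : d < e) (hdlt : z' d < z' e) (hd1 : y d = z' e) (hd2 : y e = z' d)
    (ht'o : ∀ k, k ≠ d → k ≠ e → z' k = y k) :
    (p = α ∧ q = β ∧ d = β ∧ e = γ) ∨ (p = α ∧ q = γ ∧ d = α ∧ e = β) ∨
      (p = β ∧ q = γ ∧ d = α ∧ e = γ) := by
  by_cases hdp : d = p
  · by_cases heq2 : e = q
    · exfalso
      have k1 : z' d = z' p := congrArg z' hdp
      have k2 : z' e = z' q := congrArg z' heq2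
      omega
    · -- shape B'
      have hep : e ≠ p := by omega
      have k1 : z' d = z' p := congrArg z' hdp
      have k2 : y d = y p := congrArg y hdp
      have k3 := hs'o e hep (by omega)
      have hq' : y q = x p := by have := ht'o q (by omega) (by omega); omega
      have he' : y e = x q := by omega
      have hp' : y p = x e := by omega
      have hw : x q < x e := by omega
      have hpu : p = α ∨ p = β ∨ p = γ := by
        by_contra hcon; push_neg at hcon
        have := hout p hcon.1 hcon.2.1 hcon.2.2; omega
      have hqu : q = α ∨ q = β ∨ q = γ := by
        by_contra hcon; push_neg at hcon
        have := hout q hcon.1 hcon.2.1 hcon.2.2; omega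
      rcases hpu with h1 | h1 | h1
      · have m1 : y p = y α := congrArg y h1
        have he2 : e = β := hx.2 e β (by omega) (by omega)
        have hq2 : q = γ := by rcases hqu with h2 | h2 | h2 <;> omega
        exact Or.inr (Or.inl ⟨h1, hq2, by omega, he2⟩)
      · exfalso
        have m1 : y p = y β := congrArg y h1
        have he2 : e = γ := hx.2 e γ (by omega) (by omega)
        rcases hqu with h2 | h2 | h2 <;> omega
      · exfalso
        have m1 : y p = y γ := congrArg y h1
        have he2 : e = α := hx.2 e α (by omega) (by omega)
        omega
  · by_cases hdq : d = q
    · -- shape C'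
      have k1 : y d = y q := congrArg y hdq
      have k2 : z' d = z' q := congrArg z' hdq
      have k3 := hs'o e (by omega) (by omega)
      have hp' : y p = x q := by have := ht'o p (by omega) (by omega); omega
      have hq' : y q = x e := by omega
      have he' : y e = x p := by omega
      have hw : x p < x e := by omega
      have hpu : p = α ∨ p = β ∨ p = γ := by
        by_contra hcon; push_neg at hcon
        have := hout p hcon.1 hcon.2.1 hcon.2.2; omega
      rcases hpu with h1 | h1 | h1
      · have m1 : y p = y α := congrArg y h1
        have hq2 : q = β := hx.2 q β (by omega) (by omega)
        have m2 : y q = y β := congrArg y hq2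
        have he2 : e = γ := hx.2 e γ (by omega) (by omega)
        exact Or.inl ⟨h1, hq2, by omega, he2⟩
      · exfalso
        have m1 : y p = y β := congrArg y h1
        have hq2 : q = γ := hx.2 q γ (by omega) (by omega)
        have m2 : y q = y γ := congrArg y hq2
        have he2 : e = α := hx.2 e α (by omega) (by omega)
        omega
      · exfalso
        have m1 : y p = y γ := congrArg y h1
        have hq2 : q = α := hx.2 q α (by omega) (by omega)
        omega
    · by_cases hep : e = p
      · -- shape D' : impossible for this orientation
        exfalso
        have k1 : z' e = z' p := congrArg z' hep
        have k2 : y e = y p := congrArg y hep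
        have k3 := hs'o d hdp (by omega)
        have hd'' : y d = x q := by omega
        have hq' : y q = x p := by have := ht'o q (by omega) (by omega); omega
        have hp' : y p = x d := by omega
        have hw : x d < x q := by omega
        by_cases hdeg : x d = x p
        · have hm : ∀ k, (k = α ∨ k = β ∨ k = γ) → k = d ∨ k = q := by
            intro k hk
            by_contra hcon; push_neg at hcon
            have hky : y k ≠ x k := by rcases hk with rfl | rfl | rfl <;> omega
            by_cases hkp : k = p
            · have m1 : y k = y p := congrArg y hkp
              have m2 : x k = x p := congrArg x hkp
              omega
            · have h5 := hs'o k hkp (by omega)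
              have h6 := ht'o k hcon.1 (fun hk2 => hkp (hk2.trans hep))
              omega
          have m1 := hm α (Or.inl rfl)
          have m2 := hm β (Or.inr (Or.inl rfl))
          have m3 := hm γ (Or.inr (Or.inr rfl))
          omega
        · have hdu : d = α ∨ d = β ∨ d = γ := by
            by_contra hcon; push_neg at hcon
            have := hout d hcon.1 hcon.2.1 hcon.2.2; omega
          have hpu : p = α ∨ p = β ∨ p = γ := by
            by_contra hcon; push_neg at hcon
            have := hout p hcon.1 hcon.2.1 hcon.2.2; omega
          rcases hdu with h1 | h1 | h1
          · have m1 : y d = y α := congrArg y h1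
            have hq2 : q = β := hx.2 q β (by omega) (by omega)
            rcases hpu with h2 | h2 | h2 <;> omega
          · have m1 : y d = y β := congrArg y h1
            have hq2 : q = γ := hx.2 q γ (by omega) (by omega)
            rcases hpu with h2 | h2 | h2 <;> omega
          · have m1 : y d = y γ := congrArg y h1
            have hq2 : q = α := hx.2 q α (by omega) (by omega)
            omega
      · by_cases heq2 : e = q
        · -- shape E'
          have k1 : z' e = z' q := congrArg z' heq2
          have k2 : y e = y q := congrArg y heq2
          have k3 := hs'o d hdp (by omega)
          have hd'' : y d = x p := by omega
          have hq' : y q = x d := by omega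
          have hp' : y p = x q := by have := ht'o p (by omega) (by omega); omega
          have hw : x d < x p := by omega
          have hpu : p = α ∨ p = β ∨ p = γ := by
            by_contra hcon; push_neg at hcon
            have := hout p hcon.1 hcon.2.1 hcon.2.2; omega
          have hdu : d = α ∨ d = β ∨ d = γ := by
            by_contra hcon; push_neg at hcon
            have := hout d hcon.1 hcon.2.1 hcon.2.2; omega
          rcases hpu with h1 | h1 | h1
          · exfalso
            have m1 : y p = y α := congrArg y h1
            have hq2 : q = β := hx.2 q β (by omega) (by omega)
            rcases hdu with h2 | h2 | h2 <;> omega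
          · have m1 : y p = y β := congrArg y h1
            have hq2 : q = γ := hx.2 q γ (by omega) (by omega)
            have hd2' : d = α := by
              rcases hdu with h2 | h2 | h2 <;> omega
            exact Or.inr (Or.inr ⟨h1, hq2, hd2', by omega⟩)
          · exfalso
            have m1 : y p = y γ := congrArg y h1
            have hq2 : q = α := hx.2 q α (by omega) (by omega)
            omega
        · -- disjoint pairs : impossible
          exfalso
          have k3 := hs'o d hdp hdq
          have k4 := hs'o e hep heq2
          have hp' : y p = x q := by have := ht'o p (by omega) (by omega); omega
          have hq' : y q = x p := by have := ht'o q (by omega) (by omega); omega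
          have hpu : p = α ∨ p = β ∨ p = γ := by
            by_contra hcon; push_neg at hcon
            have := hout p hcon.1 hcon.2.1 hcon.2.2; omega
          have hqu : q = α ∨ q = β ∨ q = γ := by
            by_contra hcon; push_neg at hcon
            have := hout q hcon.1 hcon.2.1 hcon.2.2; omega
          have hdu : d = α ∨ d = β ∨ d = γ := by
            by_contra hcon; push_neg at hcon
            have := hout d hcon.1 hcon.2.1 hcon.2.2; omega
          have heu : e = α ∨ e = β ∨ e = γ := by
            by_contra hcon; push_neg at hcon
            have := hout e hcon.1 hcon.2.1 hcon.2.2; omega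
          omega

/-- partner factorizations of a 3-cycle composite, orientation 2 -/
lemma cycle2_partner {x z' y : Fin n → ℕ} (hx : IsRook n x)
    (α β γ : Fin n) (hab : α < β) (hbc : β < γ)
    (hyα : y α = x γ) (hyβ : y β = x α) (hyγ : y γ = x β)
    (hne1 : x α ≠ x β) (hne2 : x β ≠ x γ) (hne3 : x γ ≠ x α)
    (hout : ∀ k, k ≠ α → k ≠ β → k ≠ γ → x k = y k)
    (p q : Fin n) (hpq : p < q) (hplt : x p < x q) (hp1 : z' p = x q) (hp2 : z' q = x p)
    (hs'o : ∀ k, k ≠ p → k ≠ q → x k = z' k)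
    (d e : Fin n) (hde : d < e) (hdlt : z' d < z' e) (hd1 : y d = z' e) (hd2 : y e = z' d)
    (ht'o : ∀ k, k ≠ d → k ≠ e → z' k = y k) :
    (p = β ∧ q = γ ∧ d = α ∧ e = β) ∨ (p = α ∧ q = γ ∧ d = β ∧ e = γ) ∨
      (p = α ∧ q = β ∧ d = α ∧ e = γ) := by
  by_cases hdp : d = p
  · by_cases heq2 : e = q
    · exfalso
      have k1 : z' d = z' p := congrArg z' hdp
      have k2 : z' e = z' q := congrArg z' heq2
      omega
    · -- shape B'
      have hep : e ≠ p := by omega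
      have k1 : z' d = z' p := congrArg z' hdp
      have k2 : y d = y p := congrArg y hdp
      have k3 := hs'o e hep (by omega)
      have hq' : y q = x p := by have := ht'o q (by omega) (by omega); omega
      have he' : y e = x q := by omega
      have hp' : y p = x e := by omega
      have hw : x q < x e := by omega
      have hpu : p = α ∨ p = β ∨ p = γ := by
        by_contra hcon; push_neg at hcon
        have := hout p hcon.1 hcon.2.1 hcon.2.2; omega
      have hqu : q = α ∨ q = β ∨ q = γ := by
        by_contra hcon; push_neg at hcon
        have := hout q hcon.1 hcon.2.1 hcon.2.2; omega
      rcases hpu with h1 | h1 | h1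
      · have m1 : y p = y α := congrArg y h1
        have he2 : e = γ := hx.2 e γ (by omega) (by omega)
        have hq2 : q = β := by rcases hqu with h2 | h2 | h2 <;> omega
        exact Or.inr (Or.inr ⟨h1, hq2, by omega, he2⟩)
      · exfalso
        have m1 : y p = y β := congrArg y h1
        have he2 : e = α := hx.2 e α (by omega) (by omega)
        omega
      · exfalso
        have m1 : y p = y γ := congrArg y h1
        have he2 : e = β := hx.2 e β (by omega) (by omega)
        omega
  · by_cases hdq : d = q
    · -- shape C' : impossible for this orientation
      exfalso
      have k1 : y d = y q := congrArg y hdq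
      have k2 : z' d = z' q := congrArg z' hdq
      have k3 := hs'o e (by omega) (by omega)
      have hp' : y p = x q := by have := ht'o p (by omega) (by omega); omega
      have hq' : y q = x e := by omega
      have he' : y e = x p := by omega
      have hw : x p < x e := by omega
      have hpu : p = α ∨ p = β ∨ p = γ := by
        by_contra hcon; push_neg at hcon
        have := hout p hcon.1 hcon.2.1 hcon.2.2; omega
      rcases hpu with h1 | h1 | h1
      · have m1 : y p = y α := congrArg y h1
        have hq2 : q = γ := hx.2 q γ (by omega) (by omega)
        have m2 : y q = y γ := congrArg y hq2
        have he2 : e = β := hx.2 e β (by omega) (by omega)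
        omega
      · have m1 : y p = y β := congrArg y h1
        have hq2 : q = α := hx.2 q α (by omega) (by omega)
        omega
      · have m1 : y p = y γ := congrArg y h1
        have hq2 : q = β := hx.2 q β (by omega) (by omega)
        omega
    · by_cases hep : e = p
      · -- shape D'
        have k1 : z' e = z' p := congrArg z' hep
        have k2 : y e = y p := congrArg y hep
        have k3 := hs'o d hdp (by omega)
        have hd'' : y d = x q := by omega
        have hq' : y q = x p := by have := ht'o q (by omega) (by omega); omega
        have hp' : y p = x d := by omega
        have hw : x d < x q := by omega
        by_cases hdeg : x d = x p
        · exfalso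
          have hm : ∀ k, (k = α ∨ k = β ∨ k = γ) → k = d ∨ k = q := by
            intro k hk
            by_contra hcon; push_neg at hcon
            have hky : y k ≠ x k := by rcases hk with rfl | rfl | rfl <;> omega
            by_cases hkp : k = p
            · have m1 : y k = y p := congrArg y hkp
              have m2 : x k = x p := congrArg x hkp
              omega
            · have h5 := hs'o k hkp (by omega)
              have h6 := ht'o k hcon.1 (fun hk2 => hkp (hk2.trans hep))
              omega
          have m1 := hm α (Or.inl rfl)
          have m2 := hm β (Or.inr (Or.inl rfl))
          have m3 := hm γ (Or.inr (Or.inr rfl))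
          omega
        · have hdu : d = α ∨ d = β ∨ d = γ := by
            by_contra hcon; push_neg at hcon
            have := hout d hcon.1 hcon.2.1 hcon.2.2; omega
          have hpu : p = α ∨ p = β ∨ p = γ := by
            by_contra hcon; push_neg at hcon
            have := hout p hcon.1 hcon.2.1 hcon.2.2; omega
          rcases hdu with h1 | h1 | h1
          · have m1 : y d = y α := congrArg y h1
            have hq2 : q = γ := hx.2 q γ (by omega) (by omega)
            have hp2' : p = β := by rcases hpu with h2 | h2 | h2 <;> omega
            exact Or.inl ⟨hp2', hq2, h1, by omega⟩
          · exfalso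
            have m1 : y d = y β := congrArg y h1
            have hq2 : q = α := hx.2 q α (by omega) (by omega)
            omega
          · exfalso
            have m1 : y d = y γ := congrArg y h1
            have hq2 : q = β := hx.2 q β (by omega) (by omega)
            omega
      · by_cases heq2 : e = q
        · -- shape E'
          have k1 : z' e = z' q := congrArg z' heq2
          have k2 : y e = y q := congrArg y heq2
          have k3 := hs'o d hdp (by omega)
          have hd'' : y d = x p := by omega
          have hq' : y q = x d := by omega
          have hp' : y p = x q := by have := ht'o p (by omega) (by omega); omega
          have hw : x d < x p := by omega
          have hpu : p = α ∨ p = β ∨ p = γ := by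
            by_contra hcon; push_neg at hcon
            have := hout p hcon.1 hcon.2.1 hcon.2.2; omega
          have hdu : d = α ∨ d = β ∨ d = γ := by
            by_contra hcon; push_neg at hcon
            have := hout d hcon.1 hcon.2.1 hcon.2.2; omega
          rcases hpu with h1 | h1 | h1
          · have m1 : y p = y α := congrArg y h1
            have hq2 : q = γ := hx.2 q γ (by omega) (by omega)
            have hd2' : d = β := by rcases hdu with h2 | h2 | h2 <;> omega
            exact Or.inr (Or.inl ⟨h1, hq2, hd2', by omega⟩)
          · exfalso
            have m1 : y p = y β := congrArg y h1
            have hq2 : q = α := hx.2 q α (by omega) (by omega)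
            omega
          · exfalso
            have m1 : y p = y γ := congrArg y h1
            have hq2 : q = β := hx.2 q β (by omega) (by omega)
            omega
        · -- disjoint pairs : impossible
          exfalso
          have k3 := hs'o d hdp hdq
          have k4 := hs'o e hep heq2
          have hp' : y p = x q := by have := ht'o p (by omega) (by omega); omega
          have hq' : y q = x p := by have := ht'o q (by omega) (by omega); omega
          have hpu : p = α ∨ p = β ∨ p = γ := by
            by_contra hcon; push_neg at hcon
            have := hout p hcon.1 hcon.2.1 hcon.2.2; omega
          have hqu : q = α ∨ q = β ∨ q = γ := by
            by_contra hcon; push_neg at hcon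
            have := hout q hcon.1 hcon.2.1 hcon.2.2; omega
          have hdu : d = α ∨ d = β ∨ d = γ := by
            by_contra hcon; push_neg at hcon
            have := hout d hcon.1 hcon.2.1 hcon.2.2; omega
          have heu : e = α ∨ e = β ∨ e = γ := by
            by_contra hcon; push_neg at hcon
            have := hout e hcon.1 hcon.2.1 hcon.2.2; omega
          omega

end Cycles
section EETT
variable {n : ℕ}

/-- path1 = (raise, raise), path2 = (swap, swap): impossible -/
lemma caseEETT {x z z' y : Fin n → ℕ}
    (a : Fin n) (ha : x a < z a) (hao : ∀ j, j ≠ a → x j = z j)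
    (b : Fin n) (hb : z b < y b) (hbo : ∀ j, j ≠ b → z j = y j)
    (p q : Fin n) (hpq : p ≠ q) (hp1 : z' p = x q) (hp2 : z' q = x p)
    (hs'o : ∀ k, k ≠ p → k ≠ q → x k = z' k)
    (d e : Fin n) (hde : d ≠ e) (hd1 : y d = z' e) (hd2 : y e = z' d)
    (ht'o : ∀ k, k ≠ d → k ≠ e → z' k = y k) : False := by
  have e1 := cnt_step1 a hao
  have e2 := cnt_step1 b hbo
  have e3 := fun w => cnt_step2 p q hpq hp1 hp2 hs'o w
  have e4 := fun w => cnt_step2 d e hde hd1 hd2 ht'o w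
  have E1 := e1 (y b); have E2 := e2 (y b)
  rw [if_neg (by omega : ¬ z b = y b), if_pos rfl] at E2
  have E3 := e3 (y b); have E4 := e4 (y b)
  have E1' := e1 (z a)
  rw [if_neg (by omega : ¬ x a = z a), if_pos rfl] at E1'
  have E2' := e2 (z a)
  have E3' := e3 (z a); have E4' := e4 (z a)
  by_cases h1 : x a = y b <;> by_cases h2 : z a = y b <;>
    [skip; skip; skip; skip] <;>
      first
      | (rw [if_pos h1] at E1; rw [if_pos h2] at E1; omega)
      | (rw [if_pos h1, if_neg h2] at E1
         rw [if_neg (by omega : ¬ y b = z a)] at E2'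
         by_cases h3 : z b = z a
         · rw [if_pos h3] at E2'; omega
         · rw [if_neg h3] at E2'; omega)
      | (rw [if_neg h1] at E1
         by_cases h2' : z a = y b
         · rw [if_pos h2'] at E1; omega
         · rw [if_neg h2'] at E1; omega)


end EETT
section TETE
variable {n : ℕ}

/-- two one-line rook matrices obtained by the same swap coincide -/
lemma swap_eq {x z z' : Fin n → ℕ} (g h : Fin n)
    (hg1 : z g = x h) (hg2 : z h = x g) (hso : ∀ k, k ≠ g → k ≠ h → x k = z k)
    (hp1 : z' g = x h) (hp2 : z' h = x g) (hs'o : ∀ k, k ≠ g → k ≠ h → x k = z' k) :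
    z' = z := by
  funext k
  by_cases k1 : k = g
  · rw [k1, hp1, hg1]
  · by_cases k2 : k = h
    · rw [k2, hp2, hg2]
    · rw [← hs'o k k1 k2, hso k k1 k2]

lemma caseTETE' {x z z' y : Fin n → ℕ}
    (hx : IsRook n x) (hz : IsRook n z) (hz' : IsRook n z') (hy : IsRook n y)
    (hne : z ≠ z')
    (g h : Fin n) (hgh : g < h) (hglt : x g < x h) (hg1 : z g = x h) (hg2 : z h = x g)
    (hso : ∀ k, k ≠ g → k ≠ h → x k = z k)
    (b : Fin n) (hb : z b < y b) (hbo : ∀ j, j ≠ b → z j = y j)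
    (p q : Fin n) (hpq : p < q) (hplt : x p < x q) (hp1 : z' p = x q) (hp2 : z' q = x p)
    (hs'o : ∀ k, k ≠ p → k ≠ q → x k = z' k)
    (c : Fin n) (hc : z' c < y c) (hco : ∀ j, j ≠ c → z' j = y j) : False := by
  have e1 := fun w => cnt_step2 g h (ne_of_lt hgh) hg1 hg2 hso w
  have e2 := cnt_step1 b hbo
  have e3 := fun w => cnt_step2 p q (ne_of_lt hpq) hp1 hp2 hs'o w
  have e4 := cnt_step1 c hco
  have hyc : y c = y b := by
    by_contra hcon
    have E1 := e1 (y b); have E2 := e2 (y b); have E3 := e3 (y b); have E4 := e4 (y b)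
    rw [if_neg (by omega : ¬ z b = y b), if_pos rfl] at E2
    rw [if_neg hcon] at E4
    by_cases hzz : z' c = y b
    · rw [if_pos hzz] at E4; omega
    · rw [if_neg hzz] at E4; omega
  have hcb : c = b := hy.2 c b (by omega) hyc
  subst hcb
  have hzc : z' c = z c := by
    by_contra hcon
    have E1 := e1 (z c); have E2 := e2 (z c); have E3 := e3 (z c); have E4 := e4 (z c)
    rw [if_pos rfl, if_neg (by omega : ¬ y c = z c)] at E2
    rw [if_neg hcon, if_neg (by omega : ¬ y c = z c)] at E4
    omega
  by_cases hbg : c = g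
  · subst hbg
    by_cases hgp : c = p
    · subst hgp
      have hq : h = q := by
        refine hx.2 h q (by omega) ?_
        rw [← hg1, ← hzc, hp1]
      subst hq
      exact hne (swap_eq c h hg1 hg2 hso hp1 hp2 hs'o).symm
    · by_cases hgq : c = q
      · subst hgq
        have hp : p = h := by
          refine hx.2 p h (by omega) ?_
          have : x p = z c := by rw [← hp2, hzc]
          rw [this, hg1]
        rw [hp] at hpq
        exact absurd (hpq.trans hgh) (lt_irrefl _)
      · have := hs'o c hgp hgq
        have := hg1
        omega
  · by_cases hbh : c = h
    · subst hbh
      by_cases hhp : c = p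
      · subst hhp
        have hxq : x q = x g := by rw [← hp1, hzc, hg2]
        by_cases hxg : x g = 0
        · omega
        · have hq : q = g := hx.2 q g (by omega) hxq
          rw [hq] at hpq
          exact absurd (hpq.trans hgh) (lt_irrefl _)
      · by_cases hhq : c = q
        · subst hhq
          by_cases hpg : p = g
          · subst hpg
            exact hne (swap_eq p c hg1 hg2 hso hp1 hp2 hs'o).symm
          · have hxp : x p = x g := by rw [← hp2, hzc, hg2]
            by_cases hxg : x g = 0
            · -- position g argument
              have h1 : z g = y g := hbo g (by omega)
              have h2 : z' g = y g := hco g (by omega)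
              have h3 : x g = z' g := hs'o g (fun hh => hpg hh.symm) (by omega)
              omega
            · have hp' : p = g := hx.2 p g (by omega) hxp
              exact hpg hp'
        · have := hs'o c hhp hhq
          have := hg2
          omega
    · have hzb : x c = z c := hso c hbg hbh
      by_cases hbp : c = p
      · subst hbp
        have := hp1
        omega
      · by_cases hbq : c = q
        · subst hbq
          have := hp2
          omega
        · have hzb' : x c = z' c := hs'o c hbp hbq
          have hgpq : g = p ∨ g = q := by
            by_contra hcon
            push_neg at hcon
            have h1 : z g = y g := hbo g (by omega)
            have h2 : z' g = y g := hco g (by omega)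
            have h3 : x g = z' g := hs'o g hcon.1 hcon.2
            omega
          have hhpq : h = p ∨ h = q := by
            by_contra hcon
            push_neg at hcon
            have h1 : z h = y h := hbo h (by omega)
            have h2 : z' h = y h := hco h (by omega)
            have h3 : x h = z' h := hs'o h hcon.1 hcon.2
            omega
          rcases hgpq with rfl | rfl
          · rcases hhpq with rfl | rfl
            · exact absurd hgh (lt_irrefl _)
            · exact hne (swap_eq g h hg1 hg2 hso hp1 hp2 hs'o).symm
          · rcases hhpq with rfl | rfl
            · exact absurd (hpq.trans hgh) (lt_irrefl _)
            · exact absurd hgh (lt_irrefl _)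
end TETE
section ETET
variable {n : ℕ}

lemma caseETET' {x z z' y : Fin n → ℕ}
    (hx : IsRook n x) (hz : IsRook n z) (hz' : IsRook n z') (hy : IsRook n y)
    (hne : z ≠ z')
    (a : Fin n) (ha : x a < z a) (hao : ∀ j, j ≠ a → x j = z j)
    (g h : Fin n) (hgh : g < h) (hglt : z g < z h) (hg1 : y g = z h) (hg2 : y h = z g)
    (hto : ∀ k, k ≠ g → k ≠ h → z k = y k)
    (c : Fin n) (hc : x c < z' c) (hco : ∀ j, j ≠ c → x j = z' j)
    (d e : Fin n) (hde : d < e) (hdlt : z' d < z' e) (hd1 : y d = z' e) (hd2 : y e = z' d)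
    (ht'o : ∀ k, k ≠ d → k ≠ e → z' k = y k) :
    Flabel x z' = Flabel z y ∨ Flabel z' y = Flabel x z := by
  have e1 := cnt_step1 a hao
  have e2 := fun w => cnt_step2 g h (ne_of_lt hgh) hg1 hg2 hto w
  have e3 := cnt_step1 c hco
  have e4 := fun w => cnt_step2 d e (ne_of_lt hde) hd1 hd2 ht'o w
  have hvc : z' c = z a := by
    by_contra hcon
    have E1 := e1 (z a); rw [if_neg (by omega : ¬ x a = z a), if_pos rfl] at E1
    have E2 := e2 (z a); have E4 := e4 (z a)
    have E3 := e3 (z a); rw [if_neg hcon] at E3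
    by_cases hxc : x c = z a
    · rw [if_pos hxc] at E3; omega
    · rw [if_neg hxc] at E3; omega
  have huc : x c = x a := by
    by_contra hcon
    have E1 := e1 (x a); rw [if_pos rfl, if_neg (by omega : ¬ z a = x a)] at E1
    have E2 := e2 (x a); have E4 := e4 (x a)
    have E3 := e3 (x a); rw [if_neg hcon, if_neg (by omega : ¬ z' c = x a)] at E3
    omega
  by_cases hca : c = a
  · exfalso
    apply hne
    subst hca
    funext k
    by_cases hk : k = c
    · rw [hk]; exact hvc.symm
    · rw [← hao k hk]; exact hco k hk
  · have hu0 : x a = 0 := by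
      by_contra hcon
      exact hca (hx.2 c a (by omega) huc)
    by_cases hag : a = g
    · exfalso
      have hxza : x a = z' a := hco a (fun hh => hca hh.symm)
      have hha : h ≠ a := by
        intro hh; rw [hh] at hgh; rw [hag] at hgh; exact absurd hgh (lt_irrefl _)
      have hzh : x h = z h := hao h hha
      have hga : z g = z a := by rw [hag]
      have hyg : y a = z h := by rw [hag]; exact hg1
      have hyh : y h = z a := by rw [hg2, hga]
      have hhc : h ≠ c := by
        intro hh
        have := congrArg x hh
        omega
      have hxh : x h = z' h := hco h hhc
      have hade : a = d ∨ a = e := by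
        by_contra hcon; push_neg at hcon
        have := ht'o a hcon.1 hcon.2
        omega
      have hhde : h = d ∨ h = e := by
        by_contra hcon; push_neg at hcon
        have := ht'o h hcon.1 hcon.2
        omega
      rcases hade with h1 | h1 <;> rcases hhde with h2 | h2
      · exact hha (h2.trans h1.symm)
      · -- a = d, h = e : y e = z' d i.e. y h = z' a
        rw [← h1, ← h2] at hd2
        omega
      · -- a = e, h = d : d < e gives h < a but a = g < h
        rw [← h1, ← h2] at hde
        exact absurd (hde.trans (hag ▸ hgh)) (lt_irrefl _)
      · exact hha (h2.trans h1.symm)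
    · by_cases hah : a = h
      · have hga' : g ≠ a := fun hh => (ne_of_lt hgh) (hh.trans hah)
        have hvga : x g = z g := hao g hga'
        have hzha : z h = z a := by rw [hah]
        have hyg : y g = z a := by rw [hg1, hzha]
        have hya : y a = z g := by rw [hah]; exact hg2
        by_cases hg0 : x g = 0
        · by_cases hcg : c = g
          · exfalso
            have hyz' : ∀ k, y k = z' k := by
              intro k
              by_cases hk1 : k = g
              · rw [hk1, hyg, ← hvc, hcg]
              · by_cases hk2 : k = a
                · rw [hk2, ← hco a (fun hh => hca hh.symm)]
                  omega
                · have h1 : z k = y k := hto k hk1 (by rw [← hah]; exact hk2)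
                  have h2 : x k = z k := hao k hk2
                  have h3 : x k = z' k := hco k (fun hh => hk1 (hh.trans hcg))
                  omega
            have E1 := hyz' d; have E2 := hyz' e
            omega
          · have hcg' : g ≠ c := fun hh => hcg hh.symm
            have hzc' : z c = y c := hto c hcg (by rw [← hah]; exact hca)
            have hxzc : x c = z c := hao c hca
            have hxg' : x g = z' g := hco g hcg'
            have hcde : c = d ∨ c = e := by
              by_contra hcon; push_neg at hcon
              have := ht'o c hcon.1 hcon.2
              omega
            have hgde : g = d ∨ g = e := by
              by_contra hcon; push_neg at hcon
              have := ht'o g hcon.1 hcon.2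
              omega
            rcases hcde with h1 | h1 <;> rcases hgde with h2 | h2
            · exact absurd (h1.trans h2.symm) hcg
            · -- c = d, g = e : z' c < z' g = x g = 0
              exfalso; rw [← h1, ← h2] at hdlt; omega
            · -- live: c = e, g = d
              left
              rw [flabel_step1 c hc hco, flabel_step2 g h hgh hglt hg1 hg2 hto]
              simp only [Prod.mk.injEq]
              constructor <;> omega
            · exact absurd (h1.trans h2.symm) hcg
        · exfalso
          have hxza : x a = z' a := hco a (fun hh => hca hh.symm)
          have hade : a = d ∨ a = e := by
            by_contra hcon; push_neg at hcon
            have := ht'o a hcon.1 hcon.2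
            omega
          have hgc : g ≠ c := fun hh => by
            have := congrArg x hh; omega
          have hxg' : x g = z' g := hco g hgc
          have hgde : g = d ∨ g = e := by
            by_contra hcon; push_neg at hcon
            have := ht'o g hcon.1 hcon.2
            omega
          rcases hade with h1 | h1 <;> rcases hgde with h2 | h2
          · exact hag (h1.trans h2.symm)
          · have h5 := ht'o c (fun hh => hca (hh.trans h1.symm)) (fun hh => hgc (h2.trans hh.symm))
            have h6 : z c = y c := hto c (fun hh => hgc hh.symm) (fun hh => hca (hh.trans hah.symm))
            have h7 : x c = z c := hao c hca
            omega
          · have h5 := ht'o c (fun hh => hgc (h2.trans hh.symm)) (fun hh => hca (hh.trans h1.symm))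
            have h6 : z c = y c := hto c (fun hh => hgc hh.symm) (fun hh => hca (hh.trans hah.symm))
            have h7 : x c = z c := hao c hca
            omega
          · exact hag (h1.trans h2.symm)
      · -- a ∉ {g, h}
        exfalso
        have hya : z a = y a := hto a hag hah
        have hzg : x g = z g := hao g (fun hh => hag hh.symm)
        have hzh : x h = z h := hao h (fun hh => hah hh.symm)
        have hxza : x a = z' a := hco a (fun hh => hca hh.symm)
        have hade : a = d ∨ a = e := by
          by_contra hcon; push_neg at hcon
          have := ht'o a hcon.1 hcon.2
          omega
        by_cases hcg : c = g
        · have hhc : h ≠ c := fun hh => by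
            have := congrArg x (hh.trans hcg); omega
          have hxh' : x h = z' h := hco h hhc
          have hhde : h = d ∨ h = e := by
            by_contra hcon; push_neg at hcon
            have := ht'o h hcon.1 hcon.2
            omega
          rcases hade with h1 | h1 <;> rcases hhde with h2 | h2
          · exact hah (h1.trans h2.symm)
          · -- a = d, h = e : z' c = z' h nonzero, c ≠ h
            rw [← h1, ← h2] at hd1
            have : c = h := hz'.2 c h (by omega) (by omega)
            exact hhc this.symm
          · -- a = e, h = d : z' h < z' a = 0
            rw [← h1, ← h2] at hdlt
            omega
          · exact hah (h1.trans h2.symm)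
        · by_cases hch : c = h
          · have := congrArg x hch
            omega
          · have hxg' : x g = z' g := hco g (fun hh => hcg hh.symm)
            have hxh' : x h = z' h := hco h (fun hh => hch hh.symm)
            have hgde : g = d ∨ g = e := by
              by_contra hcon; push_neg at hcon
              have := ht'o g hcon.1 hcon.2
              omega
            have hhde : h = d ∨ h = e := by
              by_contra hcon; push_neg at hcon
              have := ht'o h hcon.1 hcon.2
              omega
            rcases hade with h1 | h1 <;> rcases hgde with h2 | h2 <;> rcases hhde with h3 | h3 <;>
              first
                | exact hag (h1.trans h2.symm)
                | exact hah (h1.trans h3.symm)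
                | exact (ne_of_lt hgh) (h2.trans h3.symm)

end ETET
section EE
variable {n : ℕ}

lemma caseEE' {x z z' y : Fin n → ℕ}
    (hx : IsRook n x) (hz : IsRook n z) (hz' : IsRook n z') (hy : IsRook n y)
    (hc1 : RookCov n x z) (hc2 : RookCov n z y) (hc1' : RookCov n x z')
    (hne : z ≠ z')
    (a : Fin n) (ha : x a < z a) (hao : ∀ j, j ≠ a → x j = z j)
    (b : Fin n) (hb : z b < y b) (hbo : ∀ j, j ≠ b → z j = y j)
    (hs' : Step1 x z' ∨ Step2 x z') (ht' : Step1 z' y ∨ Step2 z' y) :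
    Flabel x z' = Flabel z y ∨ Flabel z' y = Flabel x z := by
  rcases hs' with ⟨c, hc, hco⟩ | ⟨p, q, hpq, hplt, hp1, hp2, hs'o⟩
  · rcases ht' with ⟨d, hd, hdo⟩ | ⟨d, e, hde, hdlt, hd1, hd2, ht'o⟩
    · -- partner (E, E)
      by_cases hba : b = a
      · -- path1 raises a twice: B1, impossible by covers
        exfalso
        subst hba
        have hxy : ∀ k, k ≠ b → x k = y k := fun k hk => (hao k hk).trans (hbo k hk)
        have hca : c = b := by
          by_contra hcon
          by_cases hdc : d = c
          · have h1 := hxy c hcon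
            have h2 : z' c < y c := hdc ▸ hd
            omega
          · have h1 := hxy c hcon
            have h2 := hdo c (fun hk => hdc hk.symm)
            omega
        have hco' : ∀ j, j ≠ b → x j = z' j := fun j hj => hco j (fun hk => hj (hk.trans hca))
        have hc' : x b < z' b := by
          have e1 : x c = x b := congrArg x hca
          have e2 : z' c = z' b := congrArg z' hca
          omega
        by_cases hlt : z b < z' b
        · exact hc1'.2 z (rookLt_of_step hx hz (Or.inl ⟨b, ha, hao⟩))
            (rookLt_of_step hz hz'
              (Or.inl ⟨b, hlt, fun j hj => ((hao j hj).symm.trans (hco' j hj))⟩))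
        · have hgt : z' b < z b := by
            rcases lt_or_eq_of_le (not_lt.1 hlt) with h' | h'
            · exact h'
            · exfalso
              apply hne
              funext k
              by_cases hk : k = b
              · rw [hk]; exact h'.symm
              · rw [← hao k hk]; exact hco' k hk
          exact hc1.2 z' (rookLt_of_step hx hz' (Or.inl ⟨b, hc', hco'⟩))
            (rookLt_of_step hz' hz
              (Or.inl ⟨b, hgt, fun j hj => ((hco' j hj).symm.trans (hao j hj))⟩))
      · -- b ≠ a : partner (E,E) in generic position
        have hab : a ≠ b := fun hk => hba hk.symm
        have hya : z a = y a := hbo a hab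
        have hzb : x b = z b := hao b hba
        have hxy : ∀ k, k ≠ a → k ≠ b → x k = y k :=
          fun k hk1 hk2 => (hao k hk1).trans (hbo k hk2)
        by_cases hca : c = a
        · -- z' must equal z
          exfalso
          subst hca
          by_cases hdb : d = b
          · apply hne
            have hza : z c = z' c := by
              have h1 := hdo c (fun hk => hab (hk.trans hdb))
              omega
            funext k
            by_cases hk : k = c
            · rw [hk]; exact hza
            · rw [← hao k hk]; exact hco k hk
          · have h1 := hco b hba
            have h2 := hdo b (fun hk => hdb hk.symm)
            omega
        · by_cases hcb : c = b
          · -- live or dead depending on d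
            by_cases hda : d = a
            · -- LIVE: crossing labels
              left
              rw [flabel_step1 c hc hco, flabel_step1 b hb hbo]
              have k1 : x c = x b := congrArg x hcb
              have k2 : z' c = z' b := congrArg z' hcb
              have k3 : z' b = y b := hdo b (fun hk => hab (hda ▸ hk).symm)
              simp only [Prod.mk.injEq]
              constructor <;> omega
            · exfalso
              by_cases hdb : d = b
              · have h1 := hco a (fun hk => hca hk.symm)
                have h2 := hdo a (fun hk => hda hk.symm)
                omega
              · have h1 := hco d (fun hk => hdb (hk.trans hcb))
                have h2 := hxy d hda hdb
                omega
          · exfalso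
            have h1 := hxy c hca hcb
            by_cases hdc : d = c
            · have h2 : z' c < y c := hdc ▸ hd
              omega
            · have h2 := hdo c (fun hk => hdc hk.symm)
              omega
    · -- partner (E, T)
      by_cases hba : b = a
      · -- Sub A
        exfalso
        subst hba
        have hxy : ∀ k, k ≠ b → x k = y k := fun k hk => (hao k hk).trans (hbo k hk)
        by_cases hca : c = b
        · by_cases hado : b = d
          · have hea : e ≠ b := fun hk => (ne_of_lt hde) (hado.symm.trans hk.symm)
            have h1 := hxy e hea
            have h2 := hco e (fun hk => hea (hk.trans hca))
            have h3 : z' b < z' e := hado ▸ hdlt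
            have h4 : y e = z' b := hado ▸ hd2
            omega
          · have hda : d ≠ b := fun hk => hado hk.symm
            have h2 := hxy d hda
            have h3 := hco d (fun hk => hda (hk.trans hca))
            omega
        · -- c ≠ b
          have hcde : c = d ∨ c = e := by
            by_contra hcon; push_neg at hcon
            have h1 := ht'o c hcon.1 hcon.2
            have h2 := hxy c hca
            omega
          have hade : b = d ∨ b = e := by
            by_contra hcon; push_neg at hcon
            have h1 := ht'o b hcon.1 hcon.2
            have h2 := hco b (fun hk => hca hk.symm)
            omega
          rcases hcde with h1 | h1 <;> rcases hade with h2 | h2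
          · exact hca (h1.trans h2.symm)
          · -- c = d, b = e
            have h3 : y c = z' b := by rw [h1, h2]; exact hd1
            have h4 := hco b (fun hk => hca hk.symm)
            have h5 := hxy c hca
            have h6 : z' c < z' b := by rw [h1, h2]; exact hdlt
            by_cases hu0 : x b = 0
            · omega
            · exact hca (hx.2 c b (by omega) (by omega))
          · -- b = d, c = e : B2 configuration, needs cover
            have h3 : y b = z' c := by rw [h2, h1]; exact hd1
            have h4 : y c = z' b := by rw [h1, h2]; exact hd2
            have h5 := hco b (fun hk => hca hk.symm)
            have h6 := hxy c hca
            have hu0 : x b = 0 := by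
              by_contra hcon
              exact hca (hx.2 c b (by omega) (by omega))
            -- intermediate w = x[c := z b]
            have hfresh : ∀ k, x k ≠ z b := by
              intro k hk
              by_cases hkb : k = b
              · rw [hkb] at hk; omega
              · have := hao k hkb
                exact hkb (hz.2 k b (by omega) (by omega))
            have hwrook : IsRook n (fun k => if k = c then z b else x k) :=
              rook_update hx c (hz.1 b) hfresh
            have hw1 : (fun k => if k = c then z b else x k) c = z b := if_pos rfl
            have hw2 : ∀ j, j ≠ c → (fun k => if k = c then z b else x k) j = x j :=
              fun j hj => if_neg hj
            refine hc1'.2 (fun k => if k = c then z b else x k)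
              (rookLt_of_step hx hwrook (Or.inl ⟨c, ?_, fun j hj => (hw2 j hj).symm⟩))
              (rookLt_of_step hwrook hz' (Or.inl ⟨c, ?_, fun j hj => (hw2 j hj).trans (hco j hj)⟩))
            · rw [hw1]; omega
            · rw [hw1]; omega
          · exact hca (h1.trans h2.symm)
      · -- Sub B, partner (E,T), b ≠ a
        have hab : a ≠ b := fun hk => hba hk.symm
        have hya : z a = y a := hbo a hab
        have hzb : x b = z b := hao b hba
        have hxy : ∀ k, k ≠ a → k ≠ b → x k = y k :=
          fun k hk1 hk2 => (hao k hk1).trans (hbo k hk2)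
        by_cases hca : c = a
        · exfalso
          have hbde : b = d ∨ b = e := by
            by_contra hcon; push_neg at hcon
            have h1 := ht'o b hcon.1 hcon.2
            have h2 := hco b (fun hk => hba (hk.trans hca))
            omega
          rcases hbde with h2 | h2
          · by_cases hea : e = a
            · have h3 : y a = z' b := by rw [hea, ← h2] at hd2; exact hd2
              have h4 := hco b (fun hk => hba (hk.trans hca))
              exact hba (hz.2 b a (by omega) (by omega))
            · have hea' : e ≠ b := fun hk => (ne_of_lt hde) (h2.symm.trans hk.symm)
              have h3 : y b = z' e := by rw [h2]; exact hd1
              have h4 := hxy e hea hea'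
              have h5 := hco e (fun hk => hea (hk.trans hca))
              have h6 : b = e := hy.2 b e (by omega) (by omega)
              exact hea' h6.symm
          · by_cases hda : d = a
            · have h3 : y a = z' b := by rw [hda, ← h2] at hd1; exact hd1
              have h4 := hco b (fun hk => hba (hk.trans hca))
              exact hba (hz.2 b a (by omega) (by omega))
            · have hda' : d ≠ b := fun hk => (ne_of_lt hde) (hk.trans h2)
              have h3 : y b = z' d := by rw [h2]; exact hd2
              have h4 := hxy d hda hda'
              have h5 := hco d (fun hk => hda (hk.trans hca))
              have h6 : b = d := hy.2 b d (by omega) (by omega)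
              exact hda' h6.symm
        · by_cases hcb : c = b
          · -- maybe live
            have hade : a = d ∨ a = e := by
              by_contra hcon; push_neg at hcon
              have h1 := ht'o a hcon.1 hcon.2
              have h2 := hco a (fun hk => hca hk.symm)
              omega
            rcases hade with h2 | h2
            · by_cases heb : e = b
              · -- LIVE
                right
                rw [flabel_step2 d e hde hdlt hd1 hd2 ht'o, flabel_step1 a ha hao]
                have k1 : z' d = z' a := congrArg z' h2.symm
                have k2 : z' e = z' b := congrArg z' heb
                have k3 := hco a (fun hk => hca hk.symm)
                have k4 : y d = z' e := hd1
                have k5 : y d = y a := congrArg y h2.symm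
                simp only [Prod.mk.injEq]
                constructor <;> omega
              · exfalso
                have h3 : y a = z' e := h2 ▸ hd1
                have h4 := hxy e (fun hk => (ne_of_lt hde) (hk.trans h2).symm) heb
                have h5 := hco e (fun hk => heb (hk.trans hcb))
                have h6 : a = e := hy.2 a e (by omega) (by omega)
                exact (ne_of_lt hde) (h2.symm.trans h6)
            · exfalso
              by_cases hdb : d = b
              · have h3 : y b = z' a := by rw [hdb, ← h2] at hd1; exact hd1
                have h4 : y a = z' d := by rw [h2]; exact hd2
                have h5 : z' d = z' b := congrArg z' hdb
                have h6 := hco a (fun hk => hca hk.symm)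
                have h7 : z' a = z' e := congrArg z' h2
                omega
              · have h3 : y a = z' d := by rw [h2]; exact hd2
                have h4 := hxy d (fun hk => (ne_of_lt hde) (hk.trans h2)) hdb
                have h5 := hco d (fun hk => hdb (hk.trans hcb))
                have h6 : a = d := hy.2 a d (by omega) (by omega)
                exact (ne_of_lt hde) (h6.symm.trans h2)
          · exfalso
            have hcde : c = d ∨ c = e := by
              by_contra hcon; push_neg at hcon
              have h1 := ht'o c hcon.1 hcon.2
              have h2 := hxy c hca hcb
              omega
            have hade : a = d ∨ a = e := by
              by_contra hcon; push_neg at hcon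
              have h1 := ht'o a hcon.1 hcon.2
              have h2 := hco a (fun hk => hca hk.symm)
              omega
            have hbde : b = d ∨ b = e := by
              by_contra hcon; push_neg at hcon
              have h1 := ht'o b hcon.1 hcon.2
              have h2 := hco b (fun hk => hcb hk.symm)
              omega
            rcases hcde with h1 | h1 <;> rcases hade with h2 | h2 <;> rcases hbde with h3 | h3 <;>
              first
                | exact hca (h1.trans h2.symm)
                | exact hcb (h1.trans h3.symm)
                | exact hab (h2.trans h3.symm)
  · rcases ht' with ⟨d, hd, hdo⟩ | ⟨d, e, hde, hdlt, hd1, hd2, ht'o⟩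
    · -- partner (T, E)
      by_cases hba : b = a
      · -- Sub A : all dead
        exfalso
        subst hba
        have hxy : ∀ k, k ≠ b → x k = y k := fun k hk => (hao k hk).trans (hbo k hk)
        by_cases hap : b = p
        · by_cases hdq : d = q
          · have h1 : z' b = y b := hdo b (fun hk => (ne_of_lt hpq) (hap.symm.trans (hk.trans hdq)))
            have h2 : z' b = x q := by rw [hap]; exact hp1
            have h3 := hxy q (fun hk => (ne_of_lt hpq) (hap.symm.trans hk.symm))
            have h4 : b = q := hy.2 b q (by omega) (by omega)
            exact (ne_of_lt hpq) (hap.symm.trans h4)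
          · by_cases hdb : d = b
            · have h1 : z' q = x b := by rw [hap]; exact hp2
              have h2 := hxy q (fun hk => (ne_of_lt hpq) (hap.symm.trans hk.symm))
              have h3 : z' q = y q := hdo q (fun hk => hdq hk.symm)
              have h4 : x p = x b := congrArg x hap.symm
              omega
            · have h1 := hs'o d (fun hk => hdb (hk.trans hap.symm)) hdq
              have h2 := hxy d hdb
              omega
        · by_cases haq : b = q
          · by_cases hdp : d = p
            · have h1 : z' p < y p := hdp ▸ hd
              have h2 : z' p = x q := hp1
              have h3 := hxy p (fun hk => hap (hk.symm))
              have h4 : x q = x b := congrArg x haq.symm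
              omega
            · have h1 := hdo p (fun hk => hdp hk.symm)
              have h2 : z' p = x q := hp1
              have h3 := hxy p (fun hk => hap (hk.symm))
              have h4 : x q = x b := congrArg x haq.symm
              omega
          · by_cases hdp : d = p
            · have h1 : z' p < y p := hdp ▸ hd
              have h2 := hxy p (fun hk => hap hk.symm)
              omega
            · have h1 := hdo p (fun hk => hdp hk.symm)
              have h2 := hxy p (fun hk => hap hk.symm)
              omega
      · -- Sub B, partner (T, E)
        have hab : a ≠ b := fun hk => hba hk.symm
        have hya : z a = y a := hbo a hab
        have hzb : x b = z b := hao b hba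
        have hxy : ∀ k, k ≠ a → k ≠ b → x k = y k :=
          fun k hk1 hk2 => (hao k hk1).trans (hbo k hk2)
        by_cases hpa : p = a
        · by_cases hqb : q = b
          · -- {p,q} = {a,b} with a < b : dead
            exfalso
            by_cases hda : d = a
            · have h1 : z' b = x a := by rw [hqb, hpa] at hp2; exact hp2
              have h2 : z' b = y b := hdo b (fun hk => hab (hk.trans hda).symm)
              have h3 : x a < x b := by
                have k1 : x p = x a := congrArg x hpa
                have k2 : x q = x b := congrArg x hqb
                omega
              omega
            · have h1 : z' a = x b := by rw [hpa, hqb] at hp1; exact hp1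
              have h2 : z' a = y a := hdo a (fun hk => hda hk.symm)
              have h3 : x a < x b := by
                have k1 : x p = x a := congrArg x hpa
                have k2 : x q = x b := congrArg x hqb
                omega
              exact hba (hz.2 b a (by omega) (by omega))
          · -- q outside {a,b} : dead
            exfalso
            have hqa : q ≠ a := fun hk => (ne_of_lt hpq) (hpa.trans hk.symm)
            have h4 := hxy q hqa hqb
            have h5 : z' q = x a := by rw [hpa] at hp2; exact hp2
            have h7 : x p = x a := congrArg x hpa
            by_cases hdq : d = q
            · have h6 : z' a = x q := by rw [hpa] at hp1; exact hp1
              have h8 : z' a = y a := hdo a (fun hk => hqa (hk.trans hdq).symm)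
              have h9 := hao q hqa
              exact hqa (hz.2 q a (by omega) (by omega))
            · have h6 := hdo q (fun hk => hdq hk.symm)
              omega
        · by_cases hqa : q = a
          · by_cases hpb : p = b
            · by_cases hda : d = a
              · -- LIVE
                left
                rw [flabel_step2 p q hpq hplt hp1 hp2 hs'o, flabel_step1 b hb hbo]
                have k1 : x p = x b := congrArg x hpb
                have k2 : x q = x a := congrArg x hqa
                have k3 : z' b = y b := hdo b (fun hk => hba (hk.trans hda))
                have k4 : z' p = z' b := congrArg z' hpb
                simp only [Prod.mk.injEq]
                constructor <;> omega
              · exfalso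
                have h1 : z' a = x b := by rw [hqa, hpb] at hp2; exact hp2
                have h2 : z' a = y a := hdo a (fun hk => hda hk.symm)
                have h3 : x b < x a := by
                  have k1 : x p = x b := congrArg x hpb
                  have k2 : x q = x a := congrArg x hqa
                  omega
                exact hba (hz.2 b a (by omega) (by omega))
            · -- p outside {a,b} : dead
              exfalso
              have h4 := hxy p hpa hpb
              have h5 : z' p = x a := by rw [hqa] at hp1; exact hp1
              have h7 : x q = x a := congrArg x hqa
              by_cases hdp : d = p
              · have h6 : z' p < y p := hdp ▸ hd
                omega
              · have h6 := hdo p (fun hk => hdp hk.symm)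
                omega
          · -- a ∉ {p,q} : dead
            exfalso
            have h0 := hs'o a (fun hk => hpa hk.symm) (fun hk => hqa hk.symm)
            by_cases hda : d = a
            · by_cases hpb : p = b
              · have h1 : z' b = x q := hpb ▸ hp1
                have h2 : z' b = y b := hdo b (fun hk => hba (hk.trans hda))
                have h3 : x p = x b := congrArg x hpb
                have hqb : q ≠ b := fun hk => (ne_of_lt hpq) (hpb.trans hk.symm)
                have h4 := hxy q (fun hk => hqa hk) hqb
                have h5 := hdo q (fun hk => hqa (hk.trans hda))
                omega
              · have h4 := hxy p hpa hpb
                have h5 := hdo p (fun hk => hpa (hk.trans hda))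
                omega
            · have h1 := hdo a (fun hk => hda hk.symm)
              omega
    · -- partner (T, T): impossible
      exact absurd trivial (fun _ => caseEETT a ha hao b hb hbo p q (ne_of_lt hpq) hp1 hp2 hs'o
        d e (ne_of_lt hde) hd1 hd2 ht'o)

end EE
section TTTT
variable {n : ℕ}

lemma caseTTTT' {x z z' y : Fin n → ℕ}
    (hx : IsRook n x) (hz : IsRook n z) (hz' : IsRook n z') (hy : IsRook n y)
    (hne : z ≠ z')
    (g h : Fin n) (hgh : g < h) (hglt : x g < x h) (hg1 : z g = x h) (hg2 : z h = x g)
    (hso : ∀ k, k ≠ g → k ≠ h → x k = z k)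
    (c d : Fin n) (hcd : c < d) (hclt : z c < z d) (hc1 : y c = z d) (hc2 : y d = z c)
    (hto : ∀ k, k ≠ c → k ≠ d → z k = y k)
    (p q : Fin n) (hpq : p < q) (hplt : x p < x q) (hp1 : z' p = x q) (hp2 : z' q = x p)
    (hs'o : ∀ k, k ≠ p → k ≠ q → x k = z' k)
    (d' e : Fin n) (hde : d' < e) (hdlt : z' d' < z' e) (hd1 : y d' = z' e) (hd2 : y e = z' d')
    (ht'o : ∀ k, k ≠ d' → k ≠ e → z' k = y k) :
    Flabel x z' = Flabel z y ∨ Flabel z' y = Flabel x z := by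
  have hxy : ∀ k, k ≠ g → k ≠ h → k ≠ c → k ≠ d → x k = y k :=
    fun k k1 k2 k3 k4 => (hso k k1 k2).trans (hto k k3 k4)
  have hzeq : ∀ (pp qq : Fin n), pp = g → qq = h → z' pp = x qq → z' qq = x pp →
      (∀ k, k ≠ pp → k ≠ qq → x k = z' k) → False := by
    intro pp qq e1 e2 m1 m2 m3
    apply hne
    have n1 : z' pp = z' g := congrArg z' e1
    have n2 : z' qq = z' h := congrArg z' e2
    have n3 : x pp = x g := congrArg x e1
    have n4 : x qq = x h := congrArg x e2
    refine (swap_eq g h hg1 hg2 hso (by omega) (by omega) ?_).symm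
    intro k k1 k2
    exact m3 k (by omega) (by omega)
  by_cases hcg : c = g
  · by_cases hdh : d = h
    · exfalso
      have k1 : z c = z g := congrArg z hcg
      have k2 : z d = z h := congrArg z hdh
      omega
    · -- path1 shape B
      have k0 : z c = z g := congrArg z hcg
      have hdg : d ≠ g := by omega
      have hzd : x d = z d := hso d hdg hdh
      have hyg : y g = x d := by
        have k1 : y c = y g := congrArg y hcg
        omega
      have hyd : y d = x h := by omega
      have hyh : y h = x g := by
        have := hto h (by omega) (by omega)
        omega
      have hout : ∀ k, k ≠ g → k ≠ h → k ≠ d → x k = y k :=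
        fun k k1 k2 k3 => hxy k k1 k2 (by omega) k3
      have hval : x h < x d := by omega
      by_cases hdh2 : h < d
      · -- B-high : cycle2 on (g,h,d)
        rcases cycle2_partner hx g h d hgh hdh2 hyg hyh hyd (by omega) (by omega) (by omega)
          hout p q hpq hplt hp1 hp2 hs'o d' e hde hdlt hd1 hd2 ht'o with
          ⟨e1, e2, e3, e4⟩ | ⟨e1, e2, e3, e4⟩ | ⟨e1, e2, e3, e4⟩
        · -- f_D : (p,q)=(h,d),(d',e)=(g,h) : inl
          left
          rw [flabel_step2 p q hpq hplt hp1 hp2 hs'o, flabel_step2 c d hcd hclt hc1 hc2 hto]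
          have k1 : x p = x h := congrArg x e1
          have k2 : x q = x d := congrArg x e2
          simp only [Prod.mk.injEq]
          exact ⟨by omega, by omega⟩
        · -- f_E2 : (p,q)=(g,d),(d',e)=(h,d) : dead
          exfalso
          have k1 := hs'o h (by omega) (by omega)
          have k2 : z' d' = z' h := congrArg z' e3
          have k3 : z' e = z' d := congrArg z' e4
          have k4 : z' q = z' d := congrArg z' e2
          have k5 : x p = x g := congrArg x e1
          omega
        · exact absurd trivial (fun _ => hzeq p q e1 e2 hp1 hp2 hs'o)
      · -- B-mid : cycle1 on (g,d,h)
        have hdh3 : d < h := by omega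
        rcases cycle1_partner hx g d h (by omega) hdh3 hyg hyd hyh (by omega) (by omega)
          (by omega) (fun k k1 k2 k3 => hout k k1 k3 k2)
          p q hpq hplt hp1 hp2 hs'o d' e hde hdlt hd1 hd2 ht'o with
          ⟨e1, e2, e3, e4⟩ | ⟨e1, e2, e3, e4⟩ | ⟨e1, e2, e3, e4⟩
        · -- f_C : (p,q)=(g,d),(d',e)=(d,h) : inr
          right
          rw [flabel_step2 d' e hde hdlt hd1 hd2 ht'o, flabel_step2 g h hgh hglt hg1 hg2 hso]
          have k1 : z' d' = z' d := congrArg z' e3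
          have k2 : z' e = z' h := congrArg z' e4
          have k3 : z' q = z' d := congrArg z' e2
          have k4 : x p = x g := congrArg x e1
          have k5 := hs'o h (by omega) (by omega)
          simp only [Prod.mk.injEq]
          exact ⟨by omega, by omega⟩
        · exact absurd trivial (fun _ => hzeq p q e1 e2 hp1 hp2 hs'o)
        · -- f_E : (p,q)=(d,h),(d',e)=(g,h) : dead by values
          exfalso
          have k1 : x p = x d := congrArg x e1
          have k2 : x q = x h := congrArg x e2
          omega
  · by_cases hch : c = h
    · -- path1 shape C : cycle1 on (g,h,d)
      have k0 : z c = z h := congrArg z hch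
      have hdg : d ≠ g := by omega
      have hdh : d ≠ h := by omega
      have hzd : x d = z d := hso d hdg hdh
      have hyh : y h = x d := by
        have k1 : y c = y h := congrArg y hch
        omega
      have hyd : y d = x g := by omega
      have hyg : y g = x h := by
        have := hto g (by omega) (by omega)
        omega
      have hdh2 : h < d := by omega
      have hvald : x g < x d := by omega
      have hnehd : x h ≠ x d := by
        intro k1
        exact hdh (hx.2 d h (by omega) (by omega))
      rcases cycle1_partner hx g h d hgh hdh2 hyg hyh hyd (by omega) (by omega) (by omega)
        (fun k k1 k2 k3 => hxy k k1 k2 (by omega) k3)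
        p q hpq hplt hp1 hp2 hs'o d' e hde hdlt hd1 hd2 ht'o with
        ⟨e1, e2, e3, e4⟩ | ⟨e1, e2, e3, e4⟩ | ⟨e1, e2, e3, e4⟩
      · exact absurd trivial (fun _ => hzeq p q e1 e2 hp1 hp2 hs'o)
      · -- f_B : (p,q)=(g,d),(d',e)=(g,h) : inl
        left
        rw [flabel_step2 p q hpq hplt hp1 hp2 hs'o, flabel_step2 c d hcd hclt hc1 hc2 hto]
        have k1 : x p = x g := congrArg x e1
        have k2 : x q = x d := congrArg x e2
        simp only [Prod.mk.injEq]
        exact ⟨by omega, by omega⟩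
      · -- f_E : (p,q)=(h,d),(d',e)=(g,d) : inr
        right
        rw [flabel_step2 d' e hde hdlt hd1 hd2 ht'o, flabel_step2 g h hgh hglt hg1 hg2 hso]
        have k1 : z' d' = z' g := congrArg z' e3
        have k2 : z' e = z' d := congrArg z' e4
        have k3 : z' q = z' d := congrArg z' e2
        have k4 : x p = x h := congrArg x e1
        have k5 := hs'o g (by omega) (by omega)
        simp only [Prod.mk.injEq]
        exact ⟨by omega, by omega⟩
    · by_cases hdg : d = g
      · -- path1 shape D
        have k0 : z d = z g := congrArg z hdg
        have hcg2 : c < g := by omega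
        have hch2 : c ≠ h := by omega
        have hzc : x c = z c := hso c (by omega) hch2
        have hyc : y c = x h := by omega
        have hyg : y g = x c := by
          have k1 : y d = y g := congrArg y hdg
          omega
        have hyh : y h = x g := by
          have := hto h (by omega) (by omega)
          omega
        have hvalc : x c < x h := by omega
        by_cases hdeg : x c = x g
        · -- degenerate : zero shuffle, U = {c,h}
          have hc0 : x c = 0 := by
            by_contra hcon
            exact (by omega : ¬ c = g) (hx.2 c g (by omega) (by omega))
          have hygg : y g = x g := by omega
          have houtD : ∀ k, k ≠ c → k ≠ h → x k = y k := by
            intro k k1 k2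
            by_cases k3 : k = g
            · have m1 : y k = y g := congrArg y k3
              have m2 : x k = x g := congrArg x k3
              omega
            · exact hxy k k3 k2 k1 (by omega)
          -- partner analysis
          by_cases hd'p : d' = p
          · exfalso
            by_cases heq2 : e = q
            · have k1 : z' d' = z' p := congrArg z' hd'p
              have k2 : z' e = z' q := congrArg z' heq2
              omega
            · have k1 : z' d' = z' p := congrArg z' hd'p
              have k2 : y d' = y p := congrArg y hd'p
              have k3 := hs'o e (by omega) (by omega)
              have hq' : y q = x p := by have := ht'o q (by omega) (by omega); omega
              have he' : y e = x q := by omega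
              have hp' : y p = x e := by omega
              have hqu : q = c ∨ q = h := by
                by_contra hcon; push_neg at hcon
                have := houtD q hcon.1 hcon.2; omega
              have heu : e = c ∨ e = h := by
                by_contra hcon; push_neg at hcon
                have := houtD e hcon.1 hcon.2; omega
              rcases hqu with m1 | m1 <;> rcases heu with m2 | m2
              · omega
              · have n1 : x q = x c := congrArg x m1
                omega
              · have n1 : x e = x c := congrArg x m2
                have n2 : x q = x h := congrArg x m1
                omega
              · omega
          · by_cases hd'q : d' = q
            · exfalso
              have k1 : y d' = y q := congrArg y hd'q
              have k2 : z' d' = z' q := congrArg z' hd'q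
              have k3 := hs'o e (by omega) (by omega)
              have hp' : y p = x q := by have := ht'o p (by omega) (by omega); omega
              have hq' : y q = x e := by omega
              have he' : y e = x p := by omega
              have hpu : p = c ∨ p = h := by
                by_contra hcon; push_neg at hcon
                have := houtD p hcon.1 hcon.2; omega
              have heu : e = c ∨ e = h := by
                by_contra hcon; push_neg at hcon
                have := houtD e hcon.1 hcon.2; omega
              rcases hpu with m1 | m1
              · have n1 : y p = y c := congrArg y m1
                have hq2 : q = h := hx.2 q h (by omega) (by omega)
                rcases heu with m2 | m2 <;> omega
              · have n1 : y p = y h := congrArg y m1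
                omega
            · by_cases hep : e = p
              · -- possibly live zero-shuffle
                have k1 : z' e = z' p := congrArg z' hep
                have k2 : y e = y p := congrArg y hep
                have k3 := hs'o d' hd'p (by omega)
                have hd'' : y d' = x q := by omega
                have hq' : y q = x p := by have := ht'o q (by omega) (by omega); omega
                have hp' : y p = x d' := by omega
                have hqu : q = c ∨ q = h := by
                  by_contra hcon; push_neg at hcon
                  have := houtD q hcon.1 hcon.2; omega
                have hd'u : d' = c ∨ d' = h := by
                  by_contra hcon; push_neg at hcon
                  have := houtD d' hcon.1 hcon.2; omega
                rcases hqu with m1 | m1 <;> rcases hd'u with m2 | m2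
                · omega
                · omega
                · -- q = h, d' = c : LIVE
                  left
                  rw [flabel_step2 p q hpq hplt hp1 hp2 hs'o,
                    flabel_step2 c d hcd hclt hc1 hc2 hto]
                  have n1 : x q = x h := congrArg x m1
                  have n2 : x d' = x c := congrArg x m2
                  have n3 : y q = y h := congrArg y m1
                  simp only [Prod.mk.injEq]
                  exact ⟨by omega, by omega⟩
                · omega
              · by_cases heq2 : e = q
                · exfalso
                  have k1 : z' e = z' q := congrArg z' heq2
                  have k2 : y e = y q := congrArg y heq2
                  have k3 := hs'o d' hd'p hd'q
                  have hd'' : y d' = x p := by omega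
                  have hq' : y q = x d' := by omega
                  have hp' : y p = x q := by have := ht'o p (by omega) (by omega); omega
                  have hpu : p = c ∨ p = h := by
                    by_contra hcon; push_neg at hcon
                    have := houtD p hcon.1 hcon.2; omega
                  have hd'u : d' = c ∨ d' = h := by
                    by_contra hcon; push_neg at hcon
                    have := houtD d' hcon.1 hcon.2; omega
                  rcases hpu with m1 | m1
                  · have n1 : y p = y c := congrArg y m1
                    have hq2 : q = h := hx.2 q h (by omega) (by omega)
                    rcases hd'u with m2 | m2 <;> omega
                  · have n1 : y p = y h := congrArg y m1
                    omega
                · exfalso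
                  have k3 := hs'o d' hd'p hd'q
                  have k4 := hs'o e hep heq2
                  have hp' : y p = x q := by have := ht'o p (by omega) (by omega); omega
                  have hq' : y q = x p := by have := ht'o q (by omega) (by omega); omega
                  have hpu : p = c ∨ p = h := by
                    by_contra hcon; push_neg at hcon
                    have := houtD p hcon.1 hcon.2; omega
                  have hqu : q = c ∨ q = h := by
                    by_contra hcon; push_neg at hcon
                    have := houtD q hcon.1 hcon.2; omega
                  have hd'u : d' = c ∨ d' = h := by
                    by_contra hcon; push_neg at hcon
                    have := houtD d' hcon.1 hcon.2; omega
                  have heu : e = c ∨ e = h := by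
                    by_contra hcon; push_neg at hcon
                    have := houtD e hcon.1 hcon.2; omega
                  omega
        · -- nondegenerate : cycle2 on (c,g,h)
          rcases cycle2_partner hx c g h hcg2 hgh hyc hyg hyh (by omega) (by omega) (by omega)
            (fun k k1 k2 k3 => hxy k k2 k3 k1 (by omega))
            p q hpq hplt hp1 hp2 hs'o d' e hde hdlt hd1 hd2 ht'o with
            ⟨e1, e2, e3, e4⟩ | ⟨e1, e2, e3, e4⟩ | ⟨e1, e2, e3, e4⟩
          · exact absurd trivial (fun _ => hzeq p q e1 e2 hp1 hp2 hs'o)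
          · -- f_E2 : (p,q)=(c,h),(d',e)=(g,h) : inl
            left
            rw [flabel_step2 p q hpq hplt hp1 hp2 hs'o, flabel_step2 c d hcd hclt hc1 hc2 hto]
            have k1 : x p = x c := congrArg x e1
            have k2 : x q = x h := congrArg x e2
            simp only [Prod.mk.injEq]
            exact ⟨by omega, by omega⟩
          · -- f_B2 : (p,q)=(c,g),(d',e)=(c,h) : inr
            right
            rw [flabel_step2 d' e hde hdlt hd1 hd2 ht'o, flabel_step2 g h hgh hglt hg1 hg2 hso]
            have k1 : z' d' = z' c := congrArg z' e3
            have k2 : z' e = z' h := congrArg z' e4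
            have k3 : z' p = z' c := congrArg z' e1
            have k4 : x q = x g := congrArg x e2
            have k5 := hs'o h (by omega) (by omega)
            simp only [Prod.mk.injEq]
            exact ⟨by omega, by omega⟩
      · by_cases hdh : d = h
        · -- path1 shape E
          have k0 : z d = z h := congrArg z hdh
          have hch2 : c < h := by omega
          have hzc : x c = z c := hso c (by omega) (by omega)
          have hyc : y c = x g := by omega
          have hyh : y h = x c := by
            have k1 : y d = y h := congrArg y hdh
            omega
          have hyg : y g = x h := by
            have := hto g (by omega) (by omega)
            omega
          have hvalc : x c < x g := by omega
          by_cases hcg2 : c < g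
          · -- E-left : cycle1 on (c,g,h)
            rcases cycle1_partner hx c g h hcg2 hgh hyc hyg hyh (by omega) (by omega) (by omega)
              (fun k k1 k2 k3 => hxy k k2 k3 k1 (by omega))
              p q hpq hplt hp1 hp2 hs'o d' e hde hdlt hd1 hd2 ht'o with
              ⟨e1, e2, e3, e4⟩ | ⟨e1, e2, e3, e4⟩ | ⟨e1, e2, e3, e4⟩
            · -- f_C : (p,q)=(c,g),(d',e)=(g,h) : inl
              left
              rw [flabel_step2 p q hpq hplt hp1 hp2 hs'o, flabel_step2 c d hcd hclt hc1 hc2 hto]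
              have k1 : x p = x c := congrArg x e1
              have k2 : x q = x g := congrArg x e2
              simp only [Prod.mk.injEq]
              exact ⟨by omega, by omega⟩
            · -- f_B : (p,q)=(c,h),(d',e)=(c,g) : dead
              exfalso
              have k1 : z' d' = z' c := congrArg z' e3
              have k2 : z' e = z' g := congrArg z' e4
              have k3 : z' p = z' c := congrArg z' e1
              have k4 : x q = x h := congrArg x e2
              have k5 := hs'o g (by omega) (by omega)
              omega
            · exact absurd trivial (fun _ => hzeq p q e1 e2 hp1 hp2 hs'o)
          · -- E-mid : cycle2 on (g,c,h)
            have hgc : g < c := by omega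
            rcases cycle2_partner hx g c h hgc (by omega) hyg hyc hyh (by omega) (by omega)
              (by omega) (fun k k1 k2 k3 => hxy k k1 k3 k2 (by omega))
              p q hpq hplt hp1 hp2 hs'o d' e hde hdlt hd1 hd2 ht'o with
              ⟨e1, e2, e3, e4⟩ | ⟨e1, e2, e3, e4⟩ | ⟨e1, e2, e3, e4⟩
            · -- f_D : (p,q)=(c,h),(d',e)=(g,c) : inr
              right
              rw [flabel_step2 d' e hde hdlt hd1 hd2 ht'o, flabel_step2 g h hgh hglt hg1 hg2 hso]
              have k1 : z' d' = z' g := congrArg z' e3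
              have k2 : z' e = z' c := congrArg z' e4
              have k3 : z' p = z' c := congrArg z' e1
              have k4 : x q = x h := congrArg x e2
              have k5 := hs'o g (by omega) (by omega)
              simp only [Prod.mk.injEq]
              exact ⟨by omega, by omega⟩
            · exact absurd trivial (fun _ => hzeq p q e1 e2 hp1 hp2 hs'o)
            · -- f_B2 : (p,q)=(g,c),(d',e)=(g,h) : dead
              exfalso
              have k1 : x p = x g := congrArg x e1
              have k2 : x q = x c := congrArg x e2
              omega
        · -- path1 shape A : disjoint swaps
          have hzc : x c = z c := hso c (by omega) (by omega)
          have hzd : x d = z d := hso d hdg hdh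
          have hyc : y c = x d := by omega
          have hyd : y d = x c := by omega
          have hyg : y g = x h := by
            have := hto g (by omega) (by omega)
            omega
          have hyh : y h = x g := by
            have := hto h (by omega) (by omega)
            omega
          have hvalc : x c < x d := by omega
          -- partner memberships
          have htouch : ∀ k, k ≠ p → k ≠ q → k ≠ d' → k ≠ e → x k = y k := by
            intro k k1 k2 k3 k4
            exact (hs'o k k1 k2).trans (ht'o k k3 k4)
          have hgm : g = p ∨ g = q ∨ g = d' ∨ g = e := by
            by_contra hcon; push_neg at hcon
            have := htouch g hcon.1 hcon.2.1 hcon.2.2.1 hcon.2.2.2; omega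
          have hhm : h = p ∨ h = q ∨ h = d' ∨ h = e := by
            by_contra hcon; push_neg at hcon
            have := htouch h hcon.1 hcon.2.1 hcon.2.2.1 hcon.2.2.2; omega
          have hcm : c = p ∨ c = q ∨ c = d' ∨ c = e := by
            by_contra hcon; push_neg at hcon
            have := htouch c hcon.1 hcon.2.1 hcon.2.2.1 hcon.2.2.2; omega
          have hdm : d = p ∨ d = q ∨ d = d' ∨ d = e := by
            by_contra hcon; push_neg at hcon
            have := htouch d hcon.1 hcon.2.1 hcon.2.2.1 hcon.2.2.2; omega
          -- overlap patterns of the partner pairs are impossible (pigeonhole)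
          by_cases hd'p : d' = p
          · exfalso
            by_cases heq2 : e = q
            · have k1 : z' d' = z' p := congrArg z' hd'p
              have k2 : z' e = z' q := congrArg z' heq2
              omega
            · omega
          · by_cases hd'q : d' = q
            · exfalso; omega
            · by_cases hep : e = p
              · exfalso; omega
              · by_cases heq2 : e = q
                · exfalso; omega
                · -- disjoint pairs : pin down the correspondence
                  have k3 := hs'o d' hd'p hd'q
                  have k4 := hs'o e hep heq2
                  have hp' : y p = x q := by have := ht'o p (by omega) (by omega); omega
                  have hq' : y q = x p := by have := ht'o q (by omega) (by omega); omega
                  have hd'' : y d' = x e := by omega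
                  have he' : y e = x d' := by omega
                  have hvde : x d' < x e := by omega
                  have hpu : p = g ∨ p = h ∨ p = c ∨ p = d := by
                    by_contra hcon; push_neg at hcon
                    have := hxy p hcon.1 hcon.2.1 hcon.2.2.1 hcon.2.2.2; omega
                  have hd'u : d' = g ∨ d' = h ∨ d' = c ∨ d' = d := by
                    by_contra hcon; push_neg at hcon
                    have := hxy d' hcon.1 hcon.2.1 hcon.2.2.1 hcon.2.2.2; omega
                  rcases hpu with m1 | m1 | m1 | m1
                  · -- p = g : q = h, then (d',e) = (c,d) : partner equals path1 : dead
                    exfalso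
                    have n1 : y p = y g := congrArg y m1
                    have hq2 : q = h := hx.2 q h (by omega) (by omega)
                    have hd'2 : d' = c := by
                      rcases hd'u with m2 | m2 | m2 | m2
                      · omega
                      · omega
                      · exact m2
                      · exfalso
                        have n2 : y d' = y d := congrArg y m2
                        by_cases hc0 : x c = 0
                        · omega
                        · have := hx.2 e c (by omega) (by omega)
                          omega
                    have n2 : y d' = y c := congrArg y hd'2
                    have he2 : e = d := hx.2 e d (by omega) (by omega)
                    -- z' = z
                    apply hne
                    funext k
                    by_cases w1 : k = g
                    · have u1 : z' p = z' g := congrArg z' m1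
                      have u2 : x q = x h := congrArg x hq2
                      have u3 : z k = z g := congrArg z w1
                      have u4 : z' k = z' g := congrArg z' w1
                      omega
                    · by_cases w2 : k = h
                      · have u1 : z' q = z' h := congrArg z' hq2
                        have u2 : x p = x g := congrArg x m1
                        have u3 : z k = z h := congrArg z w2
                        have u4 : z' k = z' h := congrArg z' w2
                        omega
                      · have u1 := hso k w1 w2
                        have u2 := hs'o k (by omega) (by omega)
                        omega
                  · -- p = h : dead
                    exfalso
                    have n1 : y p = y h := congrArg y m1
                    by_cases hg0 : x g = 0
                    · omega
                    · have hq2 : q = g := hx.2 q g (by omega) (by omega)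
                      omega
                  · -- p = c : q = d, (d',e) = (g,h) : LIVE
                    have n1 : y p = y c := congrArg y m1
                    have hq2 : q = d := hx.2 q d (by omega) (by omega)
                    have hd'2 : d' = g := by
                      rcases hd'u with m2 | m2 | m2 | m2
                      · exact m2
                      · exfalso
                        have n2 : y d' = y h := congrArg y m2
                        by_cases hg0 : x g = 0
                        · omega
                        · have := hx.2 e g (by omega) (by omega)
                          omega
                      · omega
                      · omega
                    left
                    rw [flabel_step2 p q hpq hplt hp1 hp2 hs'o,
                      flabel_step2 c d hcd hclt hc1 hc2 hto]
                    have u1 : x p = x c := congrArg x m1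
                    have u2 : x q = x d := congrArg x hq2
                    simp only [Prod.mk.injEq]
                    exact ⟨by omega, by omega⟩
                  · -- p = d : dead
                    exfalso
                    have n1 : y p = y d := congrArg y m1
                    have n2 : x p = x d := congrArg x m1
                    omega

end TTTT
section Cases
variable {n : ℕ}

/-- path1 = (raise, raise); partner arbitrary -/
lemma caseEE {x z z' y : Fin n → ℕ}
    (hx : IsRook n x) (hz : IsRook n z) (hz' : IsRook n z') (hy : IsRook n y)
    (hc1 : RookCov n x z) (hc2 : RookCov n z y) (hc1' : RookCov n x z')
    (hne : z ≠ z')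
    (a : Fin n) (ha : x a < z a) (hao : ∀ j, j ≠ a → x j = z j)
    (b : Fin n) (hb : z b < y b) (hbo : ∀ j, j ≠ b → z j = y j)
    (hs' : Step1 x z' ∨ Step2 x z') (ht' : Step1 z' y ∨ Step2 z' y) :
    Flabel x z' = Flabel z y ∨ Flabel z' y = Flabel x z :=
  caseEE' hx hz hz' hy hc1 hc2 hc1' hne a ha hao b hb hbo hs' ht' 

/-- path1 = (raise, swap), path2 = (raise, swap) -/
lemma caseETET {x z z' y : Fin n → ℕ}
    (hx : IsRook n x) (hz : IsRook n z) (hz' : IsRook n z') (hy : IsRook n y)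
    (hne : z ≠ z')
    (a : Fin n) (ha : x a < z a) (hao : ∀ j, j ≠ a → x j = z j)
    (g h : Fin n) (hgh : g < h) (hglt : z g < z h) (hg1 : y g = z h) (hg2 : y h = z g)
    (hto : ∀ k, k ≠ g → k ≠ h → z k = y k)
    (c : Fin n) (hc : x c < z' c) (hco : ∀ j, j ≠ c → x j = z' j)
    (d e : Fin n) (hde : d < e) (hdlt : z' d < z' e) (hd1 : y d = z' e) (hd2 : y e = z' d)
    (ht'o : ∀ k, k ≠ d → k ≠ e → z' k = y k) :
    Flabel x z' = Flabel z y ∨ Flabel z' y = Flabel x z :=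
  caseETET' hx hz hz' hy hne a ha hao g h hgh hglt hg1 hg2 hto c hc hco d e hde hdlt hd1 hd2 ht'o

/-- path1 = (raise, swap), path2 = (swap, raise): labels cross automatically -/
lemma caseETTE {x z z' y : Fin n → ℕ}
    (a : Fin n) (ha : x a < z a) (hao : ∀ j, j ≠ a → x j = z j)
    (g h : Fin n) (hgh : g < h) (hglt : z g < z h) (hg1 : y g = z h) (hg2 : y h = z g)
    (hto : ∀ k, k ≠ g → k ≠ h → z k = y k)
    (p q : Fin n) (hpq : p < q) (hplt : x p < x q) (hp1 : z' p = x q) (hp2 : z' q = x p)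
    (hs'o : ∀ k, k ≠ p → k ≠ q → x k = z' k)
    (c : Fin n) (hc : z' c < y c) (hco : ∀ j, j ≠ c → z' j = y j) :
    Flabel z' y = Flabel x z := by
  have e1 := cnt_step1 a hao
  have e2 := fun w => cnt_step2 g h (ne_of_lt hgh) hg1 hg2 hto w
  have e3 := fun w => cnt_step2 p q (ne_of_lt hpq) hp1 hp2 hs'o w
  have e4 := cnt_step1 c hco
  have E1 := e1 (z a)
  rw [if_neg (by omega : ¬ x a = z a), if_pos rfl] at E1
  have E2 := e2 (z a); have E3 := e3 (z a); have E4 := e4 (z a)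
  by_cases hyc : y c = z a
  · rw [if_pos hyc] at E4
    have E1' := e1 (x a)
    rw [if_pos rfl, if_neg (by omega : ¬ z a = x a)] at E1'
    have E2' := e2 (x a); have E3' := e3 (x a); have E4' := e4 (x a)
    rw [if_neg (by omega : ¬ y c = x a)] at E4'
    by_cases hzc : z' c = x a
    · rw [flabel_step1 c hc hco, flabel_step1 a ha hao, hzc, hyc]
    · rw [if_neg hzc] at E4'
      omega
  · rw [if_neg hyc] at E4
    by_cases hzc : z' c = z a
    · rw [if_pos hzc] at E4; omega
    · rw [if_neg hzc] at E4; omega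

/-- path1 = (raise, swap), path2 = (swap, swap): impossible -/
lemma caseETTT {x z z' y : Fin n → ℕ}
    (a : Fin n) (ha : x a < z a) (hao : ∀ j, j ≠ a → x j = z j)
    (g h : Fin n) (hgh : g ≠ h) (hg1 : y g = z h) (hg2 : y h = z g)
    (hto : ∀ k, k ≠ g → k ≠ h → z k = y k)
    (p q : Fin n) (hpq : p ≠ q) (hp1 : z' p = x q) (hp2 : z' q = x p)
    (hs'o : ∀ k, k ≠ p → k ≠ q → x k = z' k)
    (d e : Fin n) (hde : d ≠ e) (hd1 : y d = z' e) (hd2 : y e = z' d)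
    (ht'o : ∀ k, k ≠ d → k ≠ e → z' k = y k) : False := by
  have E1 := cnt_step1 a hao (z a)
  rw [if_neg (by omega : ¬ x a = z a), if_pos rfl] at E1
  have E2 := cnt_step2 g h hgh hg1 hg2 hto (z a)
  have E3 := cnt_step2 p q hpq hp1 hp2 hs'o (z a)
  have E4 := cnt_step2 d e hde hd1 hd2 ht'o (z a)
  omega

/-- path1 = (swap, raise), path2 = (swap, swap): impossible -/
lemma caseTETT {x z z' y : Fin n → ℕ}
    (g h : Fin n) (hgh : g ≠ h) (hg1 : z g = x h) (hg2 : z h = x g)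
    (hso : ∀ k, k ≠ g → k ≠ h → x k = z k)
    (b : Fin n) (hb : z b < y b) (hbo : ∀ j, j ≠ b → z j = y j)
    (p q : Fin n) (hpq : p ≠ q) (hp1 : z' p = x q) (hp2 : z' q = x p)
    (hs'o : ∀ k, k ≠ p → k ≠ q → x k = z' k)
    (d e : Fin n) (hde : d ≠ e) (hd1 : y d = z' e) (hd2 : y e = z' d)
    (ht'o : ∀ k, k ≠ d → k ≠ e → z' k = y k) : False := by
  have E1 := cnt_step2 g h hgh hg1 hg2 hso (y b)
  have E2 := cnt_step1 b hbo (y b)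
  rw [if_neg (by omega : ¬ z b = y b), if_pos rfl] at E2
  have E3 := cnt_step2 p q hpq hp1 hp2 hs'o (y b)
  have E4 := cnt_step2 d e hde hd1 hd2 ht'o (y b)
  omega

/-- path1 = (swap, raise), path2 = (swap, raise): impossible -/
lemma caseTETE {x z z' y : Fin n → ℕ}
    (hx : IsRook n x) (hz : IsRook n z) (hz' : IsRook n z') (hy : IsRook n y)
    (hne : z ≠ z')
    (g h : Fin n) (hgh : g < h) (hglt : x g < x h) (hg1 : z g = x h) (hg2 : z h = x g)
    (hso : ∀ k, k ≠ g → k ≠ h → x k = z k)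
    (b : Fin n) (hb : z b < y b) (hbo : ∀ j, j ≠ b → z j = y j)
    (p q : Fin n) (hpq : p < q) (hplt : x p < x q) (hp1 : z' p = x q) (hp2 : z' q = x p)
    (hs'o : ∀ k, k ≠ p → k ≠ q → x k = z' k)
    (c : Fin n) (hc : z' c < y c) (hco : ∀ j, j ≠ c → z' j = y j) : False :=
  caseTETE' hx hz hz' hy hne g h hgh hglt hg1 hg2 hso b hb hbo p q hpq hplt hp1 hp2 hs'o c hc hco

/-- path1 = (swap, swap), path2 = (swap, swap) -/
lemma caseTTTT {x z z' y : Fin n → ℕ}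
    (hx : IsRook n x) (hz : IsRook n z) (hz' : IsRook n z') (hy : IsRook n y)
    (hne : z ≠ z')
    (g h : Fin n) (hgh : g < h) (hglt : x g < x h) (hg1 : z g = x h) (hg2 : z h = x g)
    (hso : ∀ k, k ≠ g → k ≠ h → x k = z k)
    (c d : Fin n) (hcd : c < d) (hclt : z c < z d) (hc1 : y c = z d) (hc2 : y d = z c)
    (hto : ∀ k, k ≠ c → k ≠ d → z k = y k)
    (p q : Fin n) (hpq : p < q) (hplt : x p < x q) (hp1 : z' p = x q) (hp2 : z' q = x p)
    (hs'o : ∀ k, k ≠ p → k ≠ q → x k = z' k)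
    (d' e : Fin n) (hde : d' < e) (hdlt : z' d' < z' e) (hd1 : y d' = z' e) (hd2 : y e = z' d')
    (ht'o : ∀ k, k ≠ d' → k ≠ e → z' k = y k) :
    Flabel x z' = Flabel z y ∨ Flabel z' y = Flabel x z :=
  caseTTTT' hx hz hz' hy hne g h hgh hglt hg1 hg2 hso c d hcd hclt hc1 hc2 hto
    p q hpq hplt hp1 hp2 hs'o d' e hde hdlt hd1 hd2 ht'o

lemma diamond {x z z' y : Fin n → ℕ}
    (hc1 : RookCov n x z) (hc2 : RookCov n z y)
    (hc1' : RookCov n x z') (hc2' : RookCov n z' y) (hne : z ≠ z') :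
    Flabel x z' = Flabel z y ∨ Flabel z' y = Flabel x z := by
  obtain ⟨hx, hz, hs⟩ := cover_step hc1
  obtain ⟨-, hy, ht⟩ := cover_step hc2
  obtain ⟨-, hz', hs'⟩ := cover_step hc1'
  obtain ⟨-, -, ht'⟩ := cover_step hc2'
  have swapgoal : (Flabel x z = Flabel z' y ∨ Flabel z y = Flabel x z') →
      Flabel x z' = Flabel z y ∨ Flabel z' y = Flabel x z := by
    rintro (h | h)
    · exact Or.inr h.symm
    · exact Or.inl h.symm
  rcases hs with ⟨a, ha, hao⟩ | ⟨g, h, hgh, hglt, hg1, hg2, hso⟩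
  · rcases ht with ⟨b, hb, hbo⟩ | ⟨g, h, hgh, hglt, hg1, hg2, hto⟩
    · -- path1 = EE
      exact caseEE hx hz hz' hy hc1 hc2 hc1' hne a ha hao b hb hbo hs' ht'
    · -- path1 = ET
      rcases hs' with ⟨c, hcv, hco⟩ | ⟨p, q, hpq, hplt, hp1, hp2, hs'o⟩
      · rcases ht' with ⟨d, hdv, hdo⟩ | ⟨d, e, hde, hdlt, hd1, hd2, ht'o⟩
        · -- ET vs EE : swap roles
          exact swapgoal (caseEE hx hz' hz hy hc1' hc2' hc1 (Ne.symm hne) c hcv hco d hdv hdo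
            (Or.inl ⟨a, ha, hao⟩) (Or.inr ⟨g, h, hgh, hglt, hg1, hg2, hto⟩))
        · exact caseETET hx hz hz' hy hne a ha hao g h hgh hglt hg1 hg2 hto c hcv hco
            d e hde hdlt hd1 hd2 ht'o
      · rcases ht' with ⟨c, hcv, hco⟩ | ⟨d, e, hde, hdlt, hd1, hd2, ht'o⟩
        · exact Or.inr (caseETTE a ha hao g h hgh hglt hg1 hg2 hto p q hpq hplt hp1 hp2 hs'o
            c hcv hco)
        · exact absurd trivial (fun _ => caseETTT a ha hao g h (ne_of_lt hgh) hg1 hg2 hto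
            p q (ne_of_lt hpq) hp1 hp2 hs'o d e (ne_of_lt hde) hd1 hd2 ht'o)
  · rcases ht with ⟨b, hb, hbo⟩ | ⟨c, d, hcd, hclt, hc1v, hc2v, hto⟩
    · -- path1 = TE
      rcases hs' with ⟨c, hcv, hco⟩ | ⟨p, q, hpq, hplt, hp1, hp2, hs'o⟩
      · rcases ht' with ⟨d, hdv, hdo⟩ | ⟨d, e, hde, hdlt, hd1, hd2, ht'o⟩
        · exact swapgoal (caseEE hx hz' hz hy hc1' hc2' hc1 (Ne.symm hne) c hcv hco d hdv hdo
            (Or.inr ⟨g, h, hgh, hglt, hg1, hg2, hso⟩) (Or.inl ⟨b, hb, hbo⟩))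
        · exact Or.inl (caseETTE c hcv hco d e hde hdlt hd1 hd2 ht'o g h hgh hglt hg1 hg2 hso
            b hb hbo).symm
      · rcases ht' with ⟨c, hcv, hco⟩ | ⟨d, e, hde, hdlt, hd1, hd2, ht'o⟩
        · exact absurd trivial (fun _ => caseTETE hx hz hz' hy hne g h hgh hglt hg1 hg2 hso
            b hb hbo p q hpq hplt hp1 hp2 hs'o c hcv hco)
        · exact absurd trivial (fun _ => caseTETT g h (ne_of_lt hgh) hg1 hg2 hso b hb hbo
            p q (ne_of_lt hpq) hp1 hp2 hs'o d e (ne_of_lt hde) hd1 hd2 ht'o)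
    · -- path1 = TT
      rcases hs' with ⟨c', hcv, hco⟩ | ⟨p, q, hpq, hplt, hp1, hp2, hs'o⟩
      · rcases ht' with ⟨d', hdv, hdo⟩ | ⟨d', e, hde, hdlt, hd1, hd2, ht'o⟩
        · exact swapgoal (caseEE hx hz' hz hy hc1' hc2' hc1 (Ne.symm hne) c' hcv hco d' hdv hdo
            (Or.inr ⟨g, h, hgh, hglt, hg1, hg2, hso⟩)
            (Or.inr ⟨c, d, hcd, hclt, hc1v, hc2v, hto⟩))
        · exact absurd trivial (fun _ => caseETTT c' hcv hco d' e (ne_of_lt hde) hd1 hd2 ht'o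
            g h (ne_of_lt hgh) hg1 hg2 hso c d (ne_of_lt hcd) hc1v hc2v hto)
      · rcases ht' with ⟨c', hcv, hco⟩ | ⟨d', e, hde, hdlt, hd1, hd2, ht'o⟩
        · exact absurd trivial (fun _ => caseTETT p q (ne_of_lt hpq) hp1 hp2 hs'o c' hcv hco
            g h (ne_of_lt hgh) hg1 hg2 hso c d (ne_of_lt hcd) hc1v hc2v hto)
        · exact caseTTTT hx hz hz' hy hne g h hgh hglt hg1 hg2 hso c d hcd hclt hc1v hc2v hto
            p q hpq hplt hp1 hp2 hs'o d' e hde hdlt hd1 hd2 ht'o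

end Cases
theorem length_two_diamond_labels (n : ℕ) (x x₁ x₁' y : Fin n → ℕ)
    (hx : IsRook n x) (hy : IsRook n y)
    (hlen : rlen y = rlen x + 2)
    (hc1 : RookCov n x x₁) (hc2 : RookCov n x₁ y)
    (hlex : ∀ d, RookMaxChain n x y d → lexLe (labels [x, x₁, y]) (labels d))
    (hc1' : RookCov n x x₁') (hc2' : RookCov n x₁' y) (hne : x₁' ≠ x₁) :
    Flabel x x₁' = Flabel x₁ y ∨ Flabel x₁' y = Flabel x x₁ := by
  exact diamond hc1 hc2 hc1' hc2' (fun heq => hne heq.symm)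
end

section
/- Edelman's labeling is an EL-labeling of the symmetric group S_n under Bruhat order: label the cover where y is obtained from x = (a_1,...,a_n) by swapping a_i < a_j (i < j, with ℓ(y) = ℓ(x)+1) by the pair (a_i, a_j); then every interval of S_n has a unique increasing maximal chain, which is lexicographically first. -/
open Finset

variable {n : ℕ}

/-- a permutation of `{1,...,n}` in one-line notation -/
def IsPerm (n : ℕ) (a : Fin n → ℕ) : Prop :=
  (∀ i, 1 ≤ a i ∧ a i ≤ n) ∧ Function.Injective a

/-- the strong Bruhat order on `S_n` -/
def BruhatLe (n : ℕ) (a b : Fin n → ℕ) : Prop :=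
  Relation.ReflTransGen (fun x y => IsPerm n x ∧ IsPerm n y ∧ Step2 x y) a b

def BruhatLt (n : ℕ) (a b : Fin n → ℕ) : Prop := BruhatLe n a b ∧ a ≠ b

def BruhatCov (n : ℕ) (a b : Fin n → ℕ) : Prop :=
  BruhatLt n a b ∧ ∀ z, BruhatLt n a z → BruhatLt n z b → False

def IsBruhatMaxChain (n : ℕ) (x y : Fin n → ℕ) (c : List (Fin n → ℕ)) : Prop :=
  c.Chain' (BruhatCov n) ∧ c.head? = some x ∧ c.getLast? = some y

/-!
Write `highCount u k t` for the number of positions `p < k` with `u p ≥ t`. Transposing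
`u i < u j` (`i < j`) raises exactly the counts in the rectangle `i < k ≤ j`, `u i < t ≤ u j`,
and by the tableau criterion `x ≤ y` in Bruhat order iff every count of `x` is at most the
corresponding count of `y`. Covers are the transpositions with no value between `u i` and `u j`
at an intermediate position; as `u` is injective, a cover is determined by its label.

Always taking the cover with the smallest label gives an increasing chain: a descent right after
the first step would produce, by comparing rectangles, a cover of `x` below `y` with an even
smaller label. Conversely, the first label `(a, b)` of an increasing chain from `x` to `y` is the
smallest one available. A cover moving `a' < a` raises a count at threshold `a' + 1`, which no
step of the chain changes. A cover with label `(a, b')`, `b' < b`, forces a descent after the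
first step. Lexicographic minimality and uniqueness then follow along the chain, as labels
determine covers.
-/

theorem pairLt_iff {p q : ℕ × ℕ} : pairLt p q ↔ toLex p < toLex q := by
  rw [Prod.Lex.lt_iff]; rfl

theorem pairLe_iff {p q : ℕ × ℕ} : pairLe p q ↔ toLex p ≤ toLex q := by
  rw [pairLe, pairLt_iff, le_iff_eq_or_lt, toLex_inj, eq_comm]

section Swap

variable {x y : Fin n → ℕ}

theorem IsPerm.comp_swap (hx : IsPerm n x) (i j : Fin n) : IsPerm n (x ∘ Equiv.swap i j) :=
  ⟨fun _ => hx.1 _, hx.2.comp (Equiv.swap i j).injective⟩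

theorem step2_comp_swap {i j : Fin n} (hij : i < j) (hv : x i < x j) :
    Step2 x (x ∘ Equiv.swap i j) :=
  ⟨i, j, hij, hv, by simp, by simp, fun k hki hkj => by
    simp [Equiv.swap_apply_of_ne_of_ne hki hkj]⟩

theorem Step2.exists_eq_comp_swap (h : Step2 x y) :
    ∃ i j, i < j ∧ x i < x j ∧ y = x ∘ Equiv.swap i j := by
  obtain ⟨i, j, hij, hv, hi, hj, hk⟩ := h
  refine ⟨i, j, hij, hv, funext fun p => ?_⟩
  by_cases hpi : p = i
  · simp [hpi, hi]
  by_cases hpj : p = j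
  · simp [hpj, hj]
  simp [Equiv.swap_apply_of_ne_of_ne hpi hpj, hk p hpi hpj]

theorem comp_swap_comp_swap (x : Fin n → ℕ) (i j : Fin n) :
    (x ∘ Equiv.swap i j) ∘ Equiv.swap i j = x := by
  ext p; simp

end Swap

section Counting

def highCount (u : Fin n → ℕ) (k t : ℕ) : ℕ := #{p : Fin n | p.val < k ∧ t ≤ u p}

variable {u v : Fin n → ℕ}

theorem highCount_congr {k : ℕ} (h : ∀ p : Fin n, p.val < k → u p = v p) (t : ℕ) :
    highCount u k t = highCount v k t := by
  unfold highCount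
  congr 1
  exact filter_congr fun p _ => and_congr_right fun hp => by rw [h p hp]

theorem highCount_eq_add_window {a k : ℕ} (hak : a ≤ k) (t : ℕ) :
    highCount u k t = highCount u a t + #{p : Fin n | a ≤ p.val ∧ p.val < k ∧ t ≤ u p} := by
  unfold highCount
  rw [← card_filter_add_card_filter_not (s := {p : Fin n | p.val < k ∧ t ≤ u p})
    (fun p => p.val < a), filter_filter, filter_filter]
  congr 2 <;> ext p <;> simp only [mem_filter, mem_univ, true_and] <;> omega

theorem highCount_succ (i : Fin n) (t : ℕ) :
    highCount u (i.val + 1) t = highCount u i.val t + if t ≤ u i then 1 else 0 := by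
  rw [highCount_eq_add_window (Nat.le_succ _)]
  have hwindow : ({p : Fin n | i.val ≤ p.val ∧ p.val < i.val + 1 ∧ t ≤ u p} : Finset (Fin n))
      = ({i} : Finset (Fin n)).filter fun p => t ≤ u p := by
    ext p; simp only [mem_filter, mem_univ, true_and, mem_singleton, Fin.ext_iff]; omega
  rw [hwindow, filter_singleton]
  split_ifs <;> rfl

theorem highCount_add_le {s t a k : ℕ} (hak : a ≤ k)
    (h : ∀ p : Fin n, a ≤ p.val → p.val < k → s ≤ u p → t ≤ v p) :
    highCount u k s + highCount v a t ≤ highCount v k t + highCount u a s := by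
  rw [highCount_eq_add_window hak, highCount_eq_add_window (u := v) hak]
  have : #{p : Fin n | a ≤ p.val ∧ p.val < k ∧ s ≤ u p}
      ≤ #{p : Fin n | a ≤ p.val ∧ p.val < k ∧ t ≤ v p} := by
    refine card_le_card fun p => ?_
    simp only [mem_filter, mem_univ, true_and]
    exact fun ⟨h1, h2, h3⟩ => ⟨h1, h2, h p h1 h2 h3⟩
  omega

theorem highCount_comp_swap {i j : Fin n} (hij : i < j) (hu : u i < u j) (k t : ℕ) :
    highCount (u ∘ Equiv.swap i j) k t
      = highCount u k t + if i.val < k ∧ k ≤ j.val ∧ u i < t ∧ t ≤ u j then 1 else 0 := by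
  have hj : j ∈ (univ : Finset (Fin n)).erase i := mem_erase.2 ⟨hij.ne', mem_univ j⟩
  simp only [highCount, card_filter]
  rw [← add_sum_erase _ _ (mem_univ i), ← add_sum_erase _ _ hj,
    ← add_sum_erase _ (fun p => if p.val < k ∧ t ≤ u p then 1 else 0) (mem_univ i),
    ← add_sum_erase _ (fun p => if p.val < k ∧ t ≤ u p then 1 else 0) hj]
  have hrest : ∀ p ∈ ((univ : Finset (Fin n)).erase i).erase j,
      (if p.val < k ∧ t ≤ (u ∘ Equiv.swap i j) p then 1 else 0)
        = if p.val < k ∧ t ≤ u p then 1 else 0 := fun p hp => by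
    rw [mem_erase, mem_erase] at hp
    simp [Equiv.swap_apply_of_ne_of_ne hp.2.1 hp.1]
  rw [sum_congr rfl hrest]
  simp only [Function.comp_apply, Equiv.swap_apply_left, Equiv.swap_apply_right]
  have : i.val < j.val := hij
  split_ifs <;> omega

end Counting

section Tableau

variable {x y z : Fin n → ℕ}

def TableauLe (x y : Fin n → ℕ) : Prop := ∀ k t, highCount x k t ≤ highCount y k t

theorem TableauLe.refl (x : Fin n → ℕ) : TableauLe x x := fun _ _ => le_rfl

theorem TableauLe.trans (h₁ : TableauLe x y) (h₂ : TableauLe y z) : TableauLe x z :=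
  fun k t => (h₁ k t).trans (h₂ k t)

theorem tableauLe_comp_swap {i j : Fin n} (hij : i < j) (hv : x i < x j) :
    TableauLe x (x ∘ Equiv.swap i j) := fun k t => by
  rw [highCount_comp_swap hij hv]; exact Nat.le_add_right _ _

/-- For a permutation of `[1, n]`, every count that a transposition raises has its position and
threshold in `[0, n]`, so this finite sum strictly increases along Bruhat steps. -/
def tableauWeight (u : Fin n → ℕ) : ℕ :=
  ∑ q ∈ range (n + 1) ×ˢ range (n + 1), highCount u q.1 q.2

theorem TableauLe.weight_le (h : TableauLe x y) : tableauWeight x ≤ tableauWeight y :=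
  sum_le_sum fun q _ => h q.1 q.2

theorem weight_lt_comp_swap (hx : IsPerm n x) {i j : Fin n} (hij : i < j) (hv : x i < x j) :
    tableauWeight x < tableauWeight (x ∘ Equiv.swap i j) := by
  refine sum_lt_sum (fun q _ => tableauLe_comp_swap hij hv q.1 q.2) ⟨(i.val + 1, x j), ?_, ?_⟩
  · simp only [mem_product, mem_range]
    exact ⟨by omega, Nat.lt_succ_of_le (hx.1 j).2⟩
  · rw [highCount_comp_swap hij hv, if_pos ⟨by omega, by omega, hv, le_rfl⟩]
    exact Nat.lt_succ_self _

end Tableau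

section Bruhat

variable {x y z : Fin n → ℕ}

theorem bruhatLe_comp_swap (hx : IsPerm n x) {i j : Fin n} (hij : i < j) (hv : x i < x j) :
    BruhatLe n x (x ∘ Equiv.swap i j) :=
  .single ⟨hx, hx.comp_swap i j, step2_comp_swap hij hv⟩

theorem BruhatLe.tableauLe (h : BruhatLe n x y) : TableauLe x y := by
  induction h with
  | refl => exact .refl x
  | tail _ hstep ih =>
    obtain ⟨i, j, hij, hv, rfl⟩ := hstep.2.2.exists_eq_comp_swap
    exact ih.trans (tableauLe_comp_swap hij hv)

theorem BruhatLt.isPerm_left (h : BruhatLt n x y) : IsPerm n x := by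
  rcases h.1.cases_head with rfl | ⟨_, hstep, _⟩
  · exact absurd rfl h.2
  · exact hstep.1

theorem BruhatLt.isPerm_right (h : BruhatLt n x y) : IsPerm n y := by
  rcases h.1.cases_tail with rfl | ⟨_, _, hstep⟩
  · exact absurd rfl h.2
  · exact hstep.2.1

theorem BruhatLt.weight_lt (h : BruhatLt n x y) : tableauWeight x < tableauWeight y := by
  rcases h.1.cases_head with rfl | ⟨u, ⟨hx, -, hstep⟩, hrest⟩
  · exact absurd rfl h.2
  obtain ⟨i, j, hij, hv, rfl⟩ := hstep.exists_eq_comp_swap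
  exact (weight_lt_comp_swap hx hij hv).trans_le (BruhatLe.tableauLe hrest).weight_le

theorem BruhatLt.trans (h₁ : BruhatLt n x y) (h₂ : BruhatLt n y z) : BruhatLt n x z :=
  ⟨h₁.1.trans h₂.1, fun h => by
    subst h; exact (h₁.weight_lt.trans h₂.weight_lt).false⟩

theorem bruhatLt_comp_swap (hx : IsPerm n x) {i j : Fin n} (hij : i < j) (hv : x i < x j) :
    BruhatLt n x (x ∘ Equiv.swap i j) :=
  ⟨bruhatLe_comp_swap hx hij hv, fun h => (weight_lt_comp_swap hx hij hv).ne (congrArg _ h)⟩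

theorem bruhatLe_antisymm (h₁ : BruhatLe n x y) (h₂ : BruhatLe n y x) : x = y := by
  by_contra hne
  exact (BruhatLt.weight_lt ⟨h₁, hne⟩).not_ge h₂.tableauLe.weight_le

end Bruhat

section TableauCriterion

variable {x y : Fin n → ℕ}

theorem IsPerm.image_univ (hx : IsPerm n x) : univ.image x = Icc 1 n :=
  eq_of_subset_of_card_le
    (fun _ ha => by obtain ⟨p, -, rfl⟩ := mem_image.1 ha; exact mem_Icc.2 (hx.1 p))
    (by rw [card_image_of_injective _ hx.2]; simp)

theorem exists_first_lt_of_tableauLe (h : TableauLe x y) (hne : x ≠ y) :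
    ∃ i, (∀ p, p < i → x p = y p) ∧ x i < y i := by
  obtain ⟨i, hi, hmin⟩ := wellFounded_lt.has_min {p | x p ≠ y p} (Function.ne_iff.mp hne)
  have hpre : ∀ p, p < i → x p = y p := fun p hp => not_not.1 fun hne => hmin p hne hp
  refine ⟨i, hpre, lt_of_le_of_ne ?_ hi⟩
  have hcount := h (i.val + 1) (x i)
  rw [highCount_succ, highCount_succ, highCount_congr (fun p hp => hpre p hp), if_pos le_rfl]
    at hcount
  by_contra hlt
  rw [if_neg hlt] at hcount
  omega

theorem highCount_lt_of_first_gap (h : TableauLe x y) {i j : Fin n}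
    (hpre : ∀ p, p < i → x p = y p) (hxj : x i ≤ y j) (hji : y j < y i)
    (hgap : ∀ p, i < p → p < j → ¬ (x i ≤ y p ∧ y p < y i))
    {k t : ℕ} (hik : i.val < k) (hkj : k ≤ j.val) (hjt : y j < t) (hti : t ≤ y i) :
    highCount x k t < highCount y k t := by
  -- Strictly between `i` and `k`, `y` takes no value in `[x i, y i)`, so its counts at the
  -- thresholds `x i` and `t` grow alike there, while for `x` the count at `t > x i` grows at most
  -- as fast as the one at `x i`. Position `i` counts for `y` at `t` but not for `x`.
  have hx := highCount_add_le (u := x) (v := x) (s := t) (t := x i) (a := i.val + 1) hik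
    fun p _ _ hp => by omega
  have hy := highCount_add_le (u := y) (v := y) (s := x i) (t := t) (a := i.val + 1) hik
    fun p hp hpk hp' => by
      have := hgap p (by omega) (by omega)
      omega
  have hxy := h k (x i)
  rw [highCount_succ, highCount_succ] at hx hy
  rw [highCount_congr (fun p hp => hpre p hp) t,
    highCount_congr (fun p hp => hpre p hp) (x i)] at hx
  simp only [le_refl, if_true, if_neg (by omega : ¬ t ≤ x i), if_pos hti,
    if_pos (by omega : x i ≤ y i)] at hx hy
  omega

theorem TableauLe.exists_swap_tableauLe (hx : IsPerm n x) (hy : IsPerm n y) (h : TableauLe x y)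
    (hne : x ≠ y) : ∃ i j, i < j ∧ y j < y i ∧ TableauLe x (y ∘ Equiv.swap i j) := by
  obtain ⟨i, hpre, hlt⟩ := exists_first_lt_of_tableauLe h hne
  have hxi : x i ∈ univ.image y := by
    rw [hy.image_univ, ← hx.image_univ]; exact mem_image_of_mem x (mem_univ i)
  obtain ⟨q, -, hq⟩ := mem_image.1 hxi
  have hiq : i < q := by
    rcases lt_trichotomy q i with hqi | rfl | hqi
    · exact absurd (hx.2 ((hpre q hqi).trans hq)) hqi.ne
    · omega
    · exact hqi
  obtain ⟨j, ⟨hij, hxj, hji⟩, hmin⟩ := wellFounded_lt.has_min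
    {p | i < p ∧ x i ≤ y p ∧ y p < y i} ⟨q, hiq, hq.ge, hq ▸ hlt⟩
  have hgap : ∀ p, i < p → p < j → ¬ (x i ≤ y p ∧ y p < y i) :=
    fun p hip hpj hp => hmin p ⟨hip, hp⟩ hpj
  refine ⟨i, j, hij, hji, fun k t => ?_⟩
  have hback := highCount_comp_swap (u := y ∘ Equiv.swap i j) hij (by simpa using hji) k t
  simp only [comp_swap_comp_swap, Function.comp_apply, Equiv.swap_apply_left,
    Equiv.swap_apply_right] at hback
  split_ifs at hback with hrect
  · have := highCount_lt_of_first_gap h hpre hxj hji hgap hrect.1 hrect.2.1 hrect.2.2.1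
      hrect.2.2.2
    omega
  · exact (h k t).trans_eq (by omega)

end TableauCriterion

theorem bruhatLe_of_tableauLe {x y : Fin n → ℕ} (hx : IsPerm n x) (hy : IsPerm n y)
    (h : TableauLe x y) : BruhatLe n x y := by
  by_cases hne : x = y
  · exact hne ▸ .refl
  obtain ⟨i, j, hij, hji, hle⟩ := h.exists_swap_tableauLe hx hy hne
  have hy' := hy.comp_swap i j
  have hv : (y ∘ Equiv.swap i j) i < (y ∘ Equiv.swap i j) j := by simpa using hji
  have hstep := step2_comp_swap hij hv
  rw [comp_swap_comp_swap] at hstep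
  have hw : tableauWeight (y ∘ Equiv.swap i j) < tableauWeight y := by
    simpa [comp_swap_comp_swap] using weight_lt_comp_swap hy' hij hv
  exact (bruhatLe_of_tableauLe hx hy' hle).tail ⟨hy', hy, hstep⟩
termination_by tableauWeight y
decreasing_by exact hw

section Covers

variable {x y z : Fin n → ℕ}

theorem flabel_comp_swap (hx : Function.Injective x) {i j : Fin n} (hij : i < j)
    (hv : x i < x j) : Flabel x (x ∘ Equiv.swap i j) = (x i, x j) := by
  have hnot : ¬ ∃ m, x m < (x ∘ Equiv.swap i j) m ∧ ∀ p, p ≠ m → x p = (x ∘ Equiv.swap i j) p := by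
    rintro ⟨m, -, hm⟩
    by_cases him : i = m
    · have := hm j (him ▸ hij.ne')
      simp only [Function.comp_apply, Equiv.swap_apply_right] at this
      omega
    · have := hm i him
      simp only [Function.comp_apply, Equiv.swap_apply_left] at this
      omega
  have hswap : ∃ p : Fin n × Fin n, p.1 < p.2 ∧ x p.1 < x p.2 ∧
      (x ∘ Equiv.swap i j) p.1 = x p.2 ∧ (x ∘ Equiv.swap i j) p.2 = x p.1 ∧
      ∀ k, k ≠ p.1 → k ≠ p.2 → x k = (x ∘ Equiv.swap i j) k :=
    ⟨(i, j), hij, hv, by simp, by simp, fun k hki hkj => by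
      simp [Equiv.swap_apply_of_ne_of_ne hki hkj]⟩
  unfold Flabel
  rw [dif_neg hnot, dif_pos hswap]
  obtain ⟨hlt, -, h₁, h₂, -⟩ := hswap.choose_spec
  have hmoved : ∀ {p}, (x ∘ Equiv.swap i j) p ≠ x p → p = i ∨ p = j := fun {p} hp => by
    by_contra hpij
    rw [not_or] at hpij
    exact hp (by simp [Equiv.swap_apply_of_ne_of_ne hpij.1 hpij.2])
  have hne : hswap.choose.1 ≠ hswap.choose.2 := hlt.ne
  have hne₁ : (x ∘ Equiv.swap i j) hswap.choose.1 ≠ x hswap.choose.1 :=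
    h₁ ▸ fun h => hne (hx h.symm)
  have hne₂ : (x ∘ Equiv.swap i j) hswap.choose.2 ≠ x hswap.choose.2 :=
    h₂ ▸ fun h => hne (hx h)
  rcases hmoved hne₁ with h1 | h1 <;> rcases hmoved hne₂ with h2 | h2 <;>
    rw [h1, h2] at hlt ⊢ <;> first | rfl | omega

theorem BruhatCov.exists_swap (h : BruhatCov n x z) :
    ∃ i j, i < j ∧ x i < x j ∧ (∀ k, i < k → k < j → ¬ (x i < x k ∧ x k < x j)) ∧
      z = x ∘ Equiv.swap i j ∧ Flabel x z = (x i, x j) := by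
  obtain ⟨⟨hle, hne⟩, hmin⟩ := h
  rcases hle.cases_head with rfl | ⟨u, ⟨hx, hu, hstep⟩, hrest⟩
  · exact absurd rfl hne
  obtain ⟨i, j, hij, hv, rfl⟩ := hstep.exists_eq_comp_swap
  have huz : x ∘ Equiv.swap i j = z := by
    by_contra huz
    exact hmin _ (bruhatLt_comp_swap hx hij hv) ⟨hrest, huz⟩
  subst huz
  refine ⟨i, j, hij, hv, fun k hik hkj ⟨hik', hkj'⟩ => ?_, rfl, flabel_comp_swap hx.2 hij hv⟩
  -- `x < x (k j) < x (k j) (i k) < x (k j) (i k) (k j) = x (i j)`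
  set w := x ∘ Equiv.swap k j
  set v := w ∘ Equiv.swap i k
  have hxw : BruhatLt n x w := bruhatLt_comp_swap hx hkj hkj'
  have hwv : BruhatLt n w v := bruhatLt_comp_swap (hx.comp_swap k j) hik (by
    simp [Equiv.swap_apply_of_ne_of_ne hik.ne hij.ne, hv])
  have hvz : BruhatLt n v (v ∘ Equiv.swap k j) :=
    bruhatLt_comp_swap ((hx.comp_swap k j).comp_swap i k) hkj (by
      simp [Equiv.swap_apply_of_ne_of_ne hik.ne hij.ne,
        Equiv.swap_apply_of_ne_of_ne hij.ne' hkj.ne', hik'])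
  have hcomp : v ∘ Equiv.swap k j = x ∘ Equiv.swap i j := by
    have : v ∘ Equiv.swap k j = x ∘ ⇑(Equiv.swap k j * Equiv.swap i k * Equiv.swap k j) := by
      simp only [v, w, Equiv.Perm.coe_mul, Function.comp_assoc]
    rw [this, Equiv.swap_mul_swap_mul_swap hik.ne hij.ne, Equiv.swap_comm]
  exact hmin v (hxw.trans hwv) (hcomp ▸ hvz)

theorem bruhatCov_comp_swap (hx : IsPerm n x) {i j : Fin n} (hij : i < j) (hv : x i < x j)
    (hgap : ∀ k, i < k → k < j → ¬ (x i < x k ∧ x k < x j)) :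
    BruhatCov n x (x ∘ Equiv.swap i j) := by
  refine ⟨bruhatLt_comp_swap hx hij hv, fun v hxv hvz => ?_⟩
  rcases hxv.1.cases_head with rfl | ⟨u, ⟨-, -, hstep⟩, hrest⟩
  · exact hxv.2 rfl
  obtain ⟨p, q, hpq, hvpq, rfl⟩ := hstep.exists_eq_comp_swap
  -- the rectangle raised by the first step lies inside the one raised by `x → x (i j)`
  have hrect : ∀ k t, p.val < k ∧ k ≤ q.val ∧ x p < t ∧ t ≤ x q →
      i.val < k ∧ k ≤ j.val ∧ x i < t ∧ t ≤ x j := fun k t hpqkt => by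
    have hle := BruhatLe.tableauLe (hrest.trans hvz.1) k t
    rw [highCount_comp_swap hpq hvpq, highCount_comp_swap hij hv, if_pos hpqkt] at hle
    by_contra hijkt
    rw [if_neg hijkt] at hle
    omega
  have hq := hrect q (x q) ⟨hpq, le_rfl, hvpq, le_rfl⟩
  have hp := hrect (p.val + 1) (x p + 1) ⟨by omega, hpq, by omega, hvpq⟩
  have hpi : p = i := by
    by_contra hpi
    have : x p ≠ x i := fun h => hpi (hx.2 h)
    exact hgap p (by omega) (by omega) ⟨by omega, by omega⟩
  have hqj : q = j := by
    by_contra hqj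
    have : x q ≠ x j := fun h => hqj (hx.2 h)
    exact hgap q (by omega) (by omega) ⟨by omega, by omega⟩
  subst hpi hqj
  exact hvz.2 (bruhatLe_antisymm hvz.1 hrest)

theorem BruhatCov.eq_of_flabel_eq {z' : Fin n → ℕ} (h : BruhatCov n x z) (h' : BruhatCov n x z')
    (hl : Flabel x z = Flabel x z') : z = z' := by
  obtain ⟨i, j, -, -, -, rfl, hlab⟩ := h.exists_swap
  obtain ⟨i', j', -, -, -, rfl, hlab'⟩ := h'.exists_swap
  have hx := h.1.isPerm_left.2
  rw [hlab, hlab', Prod.mk.injEq] at hl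
  rw [hx hl.1, hx hl.2]

theorem exists_bruhatCov_comp_swap_of_lt (hx : IsPerm n x) {p q : Fin n} (hpq : p < q)
    (hv : x p < x q) :
    ∃ m, p < m ∧ m ≤ q ∧ x p < x m ∧ (∀ k, p < k → k ≤ q → x p < x k → x m ≤ x k) ∧
      BruhatCov n x (x ∘ Equiv.swap p m) := by
  obtain ⟨m, ⟨hpm, hmq, hvm⟩, hmin⟩ := (InvImage.wf x wellFounded_lt).has_min
    {k | p < k ∧ k ≤ q ∧ x p < x k} ⟨q, hpq, le_rfl, hv⟩
  have hmin' : ∀ k, p < k → k ≤ q → x p < x k → x m ≤ x k :=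
    fun k hpk hkq hvk => not_lt.1 (hmin k ⟨hpk, hkq, hvk⟩)
  refine ⟨m, hpm, hmq, hvm, hmin', bruhatCov_comp_swap hx hpm hvm fun k hpk hkm hk => ?_⟩
  have := hmin' k hpk (hkm.le.trans hmq) hk.1
  omega

theorem BruhatLt.exists_bruhatCov_le (h : BruhatLt n x y) :
    ∃ z, BruhatCov n x z ∧ BruhatLe n z y := by
  obtain ⟨z, ⟨hxz, hzy⟩, hmin⟩ := (InvImage.wf tableauWeight wellFounded_lt).has_min
    {z | BruhatLt n x z ∧ BruhatLe n z y} ⟨y, h, .refl⟩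
  exact ⟨z, ⟨hxz, fun v hxv hvz => hmin v ⟨hxv, hvz.1.trans hzy⟩ hvz.weight_lt⟩, hzy⟩

theorem BruhatLt.exists_bruhatCov_min_flabel (h : BruhatLt n x y) :
    ∃ z, BruhatCov n x z ∧ BruhatLe n z y ∧
      ∀ w, BruhatCov n x w → BruhatLe n w y → ¬ pairLt (Flabel x w) (Flabel x z) := by
  obtain ⟨z, ⟨hxz, hzy⟩, hmin⟩ :=
    (InvImage.wf (fun z => toLex (Flabel x z)) wellFounded_lt).has_min
      {z | BruhatCov n x z ∧ BruhatLe n z y} h.exists_bruhatCov_le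
  exact ⟨z, hxz, hzy, fun w hxw hwy => pairLt_iff.not.2 (hmin w ⟨hxw, hwy⟩)⟩

end Covers

section Descents

variable {x y z w : Fin n → ℕ}

theorem exists_bruhatCov_flabel_lt_of_lt_fst (hx : IsPerm n x) {i j P Q : Fin n} (hij : i < j)
    (hv : x i < x j) (hPQ : P < Q)
    (hvPQ : (x ∘ Equiv.swap i j) P < (x ∘ Equiv.swap i j) Q) (hlt : (x ∘ Equiv.swap i j) P < x i) :
    ∃ v, BruhatCov n x v ∧ pairLt (Flabel x v) (x i, x j) ∧
      TableauLe v ((x ∘ Equiv.swap i j) ∘ Equiv.swap P Q) := by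
  have hPi : P ≠ i := by rintro rfl; simp at hlt; omega
  have hPj : P ≠ j := by rintro rfl; simp at hlt
  have hzP : (x ∘ Equiv.swap i j) P = x P := by simp [Equiv.swap_apply_of_ne_of_ne hPi hPj]
  rw [hzP] at hlt
  have hxPQ : x P < x Q := by
    by_cases hQi : Q = i
    · subst hQi; omega
    by_cases hQj : Q = j
    · subst hQj; omega
    simpa [Equiv.swap_apply_of_ne_of_ne hPi hPj, Equiv.swap_apply_of_ne_of_ne hQi hQj] using hvPQ
  obtain ⟨m, hPm, hmQ, hvm, hmin, hcov⟩ := exists_bruhatCov_comp_swap_of_lt hx hPQ hxPQ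
  have hmQ' := hmin Q hPQ le_rfl hxPQ
  refine ⟨_, hcov, ?_, fun k t => ?_⟩
  · rw [flabel_comp_swap hx.2 hPm hvm]
    exact Or.inl hlt
  have e₁ := highCount_comp_swap hPm hvm k t
  have e₂ := highCount_comp_swap hij hv k t
  have e₃ := highCount_comp_swap hPQ hvPQ k t
  rw [hzP] at e₃
  by_cases hQi : Q = i
  · subst hQi
    simp only [Function.comp_apply, Equiv.swap_apply_left] at e₃
    split_ifs at e₁ e₂ e₃ <;> omega
  by_cases hQj : Q = j
  · subst hQj
    -- `x m` is the smallest value above `x P` in the window `(P, Q]`, which contains `i` if `P < i`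
    have hkey : i ≤ P ∨ x m ≤ x i := by
      by_cases hPi' : P < i
      · exact Or.inr (hmin i hPi' hij.le (by omega))
      · exact Or.inl (not_lt.1 hPi')
    simp only [Function.comp_apply, Equiv.swap_apply_right] at e₃
    split_ifs at e₁ e₂ e₃ <;> omega
  simp only [Function.comp_apply, Equiv.swap_apply_of_ne_of_ne hQi hQj] at e₃
  split_ifs at e₁ e₂ e₃ <;> omega

theorem exists_bruhatCov_flabel_lt_of_lt_snd (hx : IsPerm n x) {i j Q : Fin n} (hij : i < j)
    (hv : x i < x j) (hjQ : j < Q) (hiQ : x i < x Q) (hQj : x Q < x j) :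
    ∃ v, BruhatCov n x v ∧ pairLt (Flabel x v) (x i, x j) ∧
      TableauLe v ((x ∘ Equiv.swap i j) ∘ Equiv.swap j Q) := by
  obtain ⟨m, him, hmQ, hvm, hmin, hcov⟩ := exists_bruhatCov_comp_swap_of_lt hx (hij.trans hjQ) hiQ
  have hmQ' := hmin Q (hij.trans hjQ) le_rfl hiQ
  refine ⟨_, hcov, ?_, fun k t => ?_⟩
  · rw [flabel_comp_swap hx.2 him hvm]
    exact Or.inr ⟨rfl, by omega⟩
  have hQ : Equiv.swap i j Q = Q := Equiv.swap_apply_of_ne_of_ne (hij.trans hjQ).ne' hjQ.ne'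
  have e₁ := highCount_comp_swap him hvm k t
  have e₂ := highCount_comp_swap hij hv k t
  have e₃ := highCount_comp_swap (u := x ∘ Equiv.swap i j) hjQ (by simpa [hQ] using hiQ) k t
  simp only [hQ, Function.comp_apply, Equiv.swap_apply_right] at e₃
  split_ifs at e₁ e₂ e₃ <;> omega

/-- The smaller cover is the first admissible swap of `x` inside the window of the second step;
the rectangle it raises lies in the union of the two rectangles raised by the chain. -/
theorem BruhatCov.exists_bruhatCov_flabel_lt (h₀ : BruhatCov n x z) (h₁ : BruhatCov n z w)
    (hlt : pairLt (Flabel z w) (Flabel x z)) :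
    ∃ v, BruhatCov n x v ∧ pairLt (Flabel x v) (Flabel x z) ∧ TableauLe v w := by
  have hx := h₀.1.isPerm_left
  obtain ⟨i, j, hij, hv, -, rfl, hlab₀⟩ := h₀.exists_swap
  obtain ⟨P, Q, hPQ, hvPQ, -, rfl, hlab₁⟩ := h₁.exists_swap
  rw [hlab₀, hlab₁] at hlt
  rw [hlab₀]
  rcases hlt with hlt | ⟨heq, hlt⟩ <;> dsimp only at hlt
  · exact exists_bruhatCov_flabel_lt_of_lt_fst hx hij hv hPQ hvPQ hlt
  · obtain rfl : P = j := (hx.comp_swap i j).2 (by simpa using heq)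
    have hzQ : (x ∘ Equiv.swap i P) Q = x Q := by
      simp [Equiv.swap_apply_of_ne_of_ne (hij.trans hPQ).ne' hPQ.ne']
    rw [hzQ] at hvPQ hlt
    exact exists_bruhatCov_flabel_lt_of_lt_snd hx hij hv hPQ (by simpa using hvPQ) hlt

theorem BruhatCov.exists_bruhatCov_flabel_lt_of_fst_eq {z₀ z₁ : Fin n → ℕ}
    (h₀ : BruhatCov n x z₀) (h₁ : BruhatCov n x z₁)
    (hfst : (Flabel x z₀).1 = (Flabel x z₁).1) (hsnd : (Flabel x z₀).2 < (Flabel x z₁).2)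
    (h₀y : TableauLe z₀ y) (h₁y : TableauLe z₁ y) :
    ∃ w, BruhatCov n z₁ w ∧ pairLt (Flabel z₁ w) (Flabel x z₁) ∧ TableauLe w y := by
  have hx := h₀.1.isPerm_left
  obtain ⟨i, j₀, hij₀, hv₀, -, rfl, hlab₀⟩ := h₀.exists_swap
  obtain ⟨i', j₁, hij₁, hv₁, hgap₁, rfl, hlab₁⟩ := h₁.exists_swap
  rw [hlab₀, hlab₁] at hfst hsnd
  obtain rfl : i = i' := hx.2 hfst
  have hj₁j₀ : j₁ < j₀ := by
    rcases lt_trichotomy j₁ j₀ with h | rfl | h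
    · exact h
    · exact absurd hsnd (lt_irrefl _)
    · exact absurd ⟨hv₀, hsnd⟩ (hgap₁ j₀ hij₀ h)
  have hzj₁ : (x ∘ Equiv.swap i j₁) j₁ = x i := by simp
  have hzj₀ : (x ∘ Equiv.swap i j₁) j₀ = x j₀ := by
    simp [Equiv.swap_apply_of_ne_of_ne hij₀.ne' hj₁j₀.ne']
  obtain ⟨m, hj₁m, hmj₀, hvm, hmin, hcov⟩ :=
    exists_bruhatCov_comp_swap_of_lt (hx.comp_swap i j₁) hj₁j₀ (by rw [hzj₁, hzj₀]; exact hv₀)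
  have hmj₀' := hmin j₀ hj₁j₀ le_rfl (by rw [hzj₁, hzj₀]; exact hv₀)
  rw [hzj₀] at hmj₀'
  refine ⟨_, hcov, ?_, fun k t => ?_⟩
  · rw [flabel_comp_swap (hx.comp_swap i j₁).2 hj₁m hvm, hlab₁, hzj₁]
    exact Or.inr ⟨rfl, by omega⟩
  have e₁ := highCount_comp_swap hj₁m hvm k t
  have e₂ := highCount_comp_swap hij₁ hv₁ k t
  have e₃ := highCount_comp_swap hij₀ hv₀ k t
  have hy₀ := h₀y k t
  have hy₁ := h₁y k t
  rw [hzj₁] at e₁ hvm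
  split_ifs at e₁ e₂ e₃ <;> omega

end Descents

section Chains

variable {x y z : Fin n → ℕ} {c d : List (Fin n → ℕ)}

theorem labels_cons_cons (x z : Fin n → ℕ) (c : List (Fin n → ℕ)) :
    labels (x :: z :: c) = Flabel x z :: labels (z :: c) := rfl

theorem isBruhatMaxChain_iff :
    IsBruhatMaxChain n x y c ↔ c.IsChain (BruhatCov n) ∧ c.head? = some x ∧ c.getLast? = some y :=
  Iff.rfl

theorem isBruhatMaxChain_singleton : IsBruhatMaxChain n x y [z] ↔ z = x ∧ z = y := by
  simp [isBruhatMaxChain_iff]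

theorem isBruhatMaxChain_cons_cons :
    IsBruhatMaxChain n x y (x :: z :: c) ↔ BruhatCov n x z ∧ IsBruhatMaxChain n z y (z :: c) := by
  simp [isBruhatMaxChain_iff, List.isChain_cons_cons, List.getLast?_cons_cons, and_assoc]

theorem IsBruhatMaxChain.eq_cons (h : IsBruhatMaxChain n x y c) : ∃ c', c = x :: c' :=
  List.head?_eq_some_iff.1 h.2.1

theorem IsBruhatMaxChain.head_eq {a : Fin n → ℕ} (h : IsBruhatMaxChain n x y (a :: c)) : x = a := by
  simpa [eq_comm] using h.2.1

theorem IsBruhatMaxChain.cons (hxz : BruhatCov n x z) (h : IsBruhatMaxChain n z y c) :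
    IsBruhatMaxChain n x y (x :: c) := by
  obtain ⟨c, rfl⟩ := h.eq_cons
  exact isBruhatMaxChain_cons_cons.2 ⟨hxz, h⟩

theorem IsBruhatMaxChain.bruhatLe (h : IsBruhatMaxChain n x y c) : BruhatLe n x y := by
  induction c generalizing x with
  | nil => exact absurd h.2.1 (by simp)
  | cons a c ih =>
    obtain rfl := h.head_eq
    cases c with
    | nil => exact (isBruhatMaxChain_singleton.1 h).2 ▸ .refl
    | cons z c =>
      obtain ⟨hxz, hz⟩ := isBruhatMaxChain_cons_cons.1 h
      exact hxz.1.1.trans (ih hz)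

theorem BruhatLt.ne_of_bruhatLe (h : BruhatLt n x z) (hzy : BruhatLe n z y) : x ≠ y :=
  fun hxy => h.2 (bruhatLe_antisymm h.1 (hxy ▸ hzy))

theorem IsBruhatMaxChain.exists_cons_cons (h : IsBruhatMaxChain n x y c) (hxy : x ≠ y) :
    ∃ z c', c = x :: z :: c' ∧ BruhatCov n x z ∧ IsBruhatMaxChain n z y (z :: c') := by
  obtain ⟨_ | ⟨z, c'⟩, rfl⟩ := h.eq_cons
  · exact absurd (isBruhatMaxChain_singleton.1 h).2 hxy
  · exact ⟨z, c', rfl, isBruhatMaxChain_cons_cons.1 h⟩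

theorem IsBruhatMaxChain.eq_singleton (h : IsBruhatMaxChain n x x c) : c = [x] := by
  obtain ⟨_ | ⟨z, c'⟩, rfl⟩ := h.eq_cons
  · rfl
  · obtain ⟨hxz, hz⟩ := isBruhatMaxChain_cons_cons.1 h
    exact absurd rfl (hxz.1.ne_of_bruhatLe hz.bruhatLe)

theorem IsBruhatMaxChain.highCount_eq {t : ℕ} (h : IsBruhatMaxChain n x y c)
    (ht : ∀ μ ∈ labels c, t ≤ μ.1) (k : ℕ) : highCount x k t = highCount y k t := by
  induction c generalizing x with
  | nil => exact absurd h.2.1 (by simp)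
  | cons a c ih =>
    obtain rfl := h.head_eq
    cases c with
    | nil => rw [(isBruhatMaxChain_singleton.1 h).2]
    | cons z c =>
      obtain ⟨hxz, hz⟩ := isBruhatMaxChain_cons_cons.1 h
      obtain ⟨i, j, hij, hv, -, rfl, hlab⟩ := hxz.exists_swap
      have hti := ht _ (labels_cons_cons .. ▸ List.mem_cons_self)
      rw [hlab] at hti
      rw [← ih hz fun μ hμ => ht μ (labels_cons_cons .. ▸ List.mem_cons_of_mem _ hμ),
        highCount_comp_swap hij hv, if_neg (by omega), add_zero]

theorem fst_le_of_isChain_pairLe {μ : ℕ × ℕ} {L : List (ℕ × ℕ)} (h : (μ :: L).IsChain pairLe) :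
    ∀ ν ∈ μ :: L, μ.1 ≤ ν.1 := by
  induction L generalizing μ with
  | nil => simp
  | cons ν L ih =>
    obtain ⟨hμν, hν⟩ := List.isChain_cons_cons.1 h
    have hfst : μ.1 ≤ ν.1 := by rcases hμν with rfl | hlt | ⟨heq, -⟩ <;> omega
    intro κ hκ
    rcases List.mem_cons.1 hκ with rfl | hκ
    · exact le_rfl
    · exact hfst.trans (ih hν κ hκ)

end Chains

section ELLabeling

theorem IsBruhatMaxChain.not_tableauLe_of_flabel_fst_lt {x y z : Fin n → ℕ}
    {c : List (Fin n → ℕ)} (h : IsBruhatMaxChain n x y c) (hz : BruhatCov n x z)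
    (hfst : ∀ μ ∈ labels c, (Flabel x z).1 < μ.1) : ¬ TableauLe z y := by
  obtain ⟨i, j, hij, hv, -, rfl, hlab⟩ := hz.exists_swap
  rw [hlab] at hfst
  dsimp only at hfst
  intro hzy
  have hcount := h.highCount_eq (t := x i + 1) hfst (i.val + 1)
  have hbump := highCount_comp_swap hij hv (i.val + 1) (x i + 1)
  rw [if_pos ⟨by omega, by omega, by omega, by omega⟩] at hbump
  have := hzy (i.val + 1) (x i + 1)
  omega

theorem IsBruhatMaxChain.flabel_le_of_isChain {x y z z₁ : Fin n → ℕ}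
    {c : List (Fin n → ℕ)} (h : IsBruhatMaxChain n x y (x :: z₁ :: c))
    (hinc : (labels (x :: z₁ :: c)).IsChain pairLe) (hz : BruhatCov n x z)
    (hzy : TableauLe z y) : pairLe (Flabel x z₁) (Flabel x z) := by
  obtain ⟨hxz₁, hz₁⟩ := isBruhatMaxChain_cons_cons.1 h
  rw [pairLe_iff, ← not_lt, ← pairLt_iff]
  rintro (hfst | ⟨hfst, hsnd⟩)
  · refine h.not_tableauLe_of_flabel_fst_lt hz (fun μ hμ => ?_) hzy
    exact hfst.trans_le (fst_le_of_isChain_pairLe hinc μ hμ)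
  -- same smallest value: `z₁` is followed by a descent, which the increasing chain cannot avoid
  obtain ⟨w, hz₁w, hlt, hwy⟩ := hz.exists_bruhatCov_flabel_lt_of_fst_eq hxz₁ hfst hsnd hzy
    hz₁.bruhatLe.tableauLe
  match c, hz₁, hinc with
  | [], hz₁, _ =>
    obtain rfl := (isBruhatMaxChain_singleton.1 hz₁).2
    exact hz₁w.1.weight_lt.not_ge hwy.weight_le
  | z₂ :: c, hz₁, hinc =>
    rw [labels_cons_cons, labels_cons_cons, List.isChain_cons_cons] at hinc
    have hle := hz₁.flabel_le_of_isChain hinc.2 hz₁w hwy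
    rw [pairLe_iff] at hle hinc
    exact (pairLt_iff.1 hlt).not_ge (hinc.1.trans hle)

theorem exists_isBruhatMaxChain_isChain {x y : Fin n → ℕ} (h : BruhatLe n x y) :
    ∃ c, IsBruhatMaxChain n x y c ∧ (labels c).IsChain pairLe := by
  by_cases hxy : x = y
  · subst hxy
    exact ⟨[x], isBruhatMaxChain_singleton.2 ⟨rfl, rfl⟩, List.isChain_nil⟩
  have hlt : BruhatLt n x y := ⟨h, hxy⟩
  obtain ⟨z, hxz, hzy, hmin⟩ := hlt.exists_bruhatCov_min_flabel
  have hdec : tableauWeight y - tableauWeight z < tableauWeight y - tableauWeight x := by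
    have := hxz.1.weight_lt
    have := hzy.tableauLe.weight_le
    omega
  obtain ⟨c, hc, hinc⟩ := exists_isBruhatMaxChain_isChain hzy
  obtain ⟨_ | ⟨w, c⟩, rfl⟩ := hc.eq_cons
  · exact ⟨[x, z], hc.cons hxz, List.isChain_singleton _⟩
  refine ⟨x :: z :: w :: c, hc.cons hxz, ?_⟩
  rw [labels_cons_cons, labels_cons_cons, List.isChain_cons_cons]
  refine ⟨?_, hinc⟩
  obtain ⟨hzw, hw⟩ := isBruhatMaxChain_cons_cons.1 hc
  rw [pairLe_iff, ← not_lt, ← pairLt_iff]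
  intro hdesc
  obtain ⟨v, hxv, hvlt, hvw⟩ := hxz.exists_bruhatCov_flabel_lt hzw hdesc
  exact hmin v hxv (bruhatLe_of_tableauLe hxv.1.isPerm_right hlt.isPerm_right
    (hvw.trans hw.bruhatLe.tableauLe)) hvlt
termination_by tableauWeight y - tableauWeight x
decreasing_by exact hdec

theorem lexLe_nil (L : List (ℕ × ℕ)) : lexLe [] L := by
  cases L
  · exact Or.inl rfl
  · exact Or.inr List.Lex.nil

theorem lexLe.cons {L M : List (ℕ × ℕ)} (μ : ℕ × ℕ) (h : lexLe L M) : lexLe (μ :: L) (μ :: M) :=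
  h.elim (fun h => Or.inl (h ▸ rfl)) (fun h => Or.inr (.cons h))

theorem IsBruhatMaxChain.lexLe_labels_of_isChain {x y : Fin n → ℕ}
    {c d : List (Fin n → ℕ)} (hc : IsBruhatMaxChain n x y c) (hinc : (labels c).IsChain pairLe)
    (hd : IsBruhatMaxChain n x y d) : lexLe (labels c) (labels d) := by
  obtain ⟨_ | ⟨z, c⟩, rfl⟩ := hc.eq_cons
  · exact lexLe_nil _
  obtain ⟨hxz, hz⟩ := isBruhatMaxChain_cons_cons.1 hc
  obtain ⟨w, d, rfl, hxw, hw⟩ := hd.exists_cons_cons (hxz.1.ne_of_bruhatLe hz.bruhatLe)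
  rw [labels_cons_cons, labels_cons_cons]
  rcases hc.flabel_le_of_isChain hinc hxw hw.bruhatLe.tableauLe with heq | hlt
  · obtain rfl := hxz.eq_of_flabel_eq hxw heq
    exact (hz.lexLe_labels_of_isChain hinc.tail hw).cons _
  · exact Or.inr (.rel hlt)

theorem IsBruhatMaxChain.eq_of_isChain {x y : Fin n → ℕ} {c d : List (Fin n → ℕ)}
    (hc : IsBruhatMaxChain n x y c) (hcinc : (labels c).IsChain pairLe)
    (hd : IsBruhatMaxChain n x y d) (hdinc : (labels d).IsChain pairLe) : c = d := by
  obtain ⟨_ | ⟨z, c⟩, rfl⟩ := hc.eq_cons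
  · obtain rfl := (isBruhatMaxChain_singleton.1 hc).2
    exact hd.eq_singleton.symm
  obtain ⟨hxz, hz⟩ := isBruhatMaxChain_cons_cons.1 hc
  obtain ⟨w, d, rfl, hxw, hw⟩ := hd.exists_cons_cons (hxz.1.ne_of_bruhatLe hz.bruhatLe)
  have hzw := hc.flabel_le_of_isChain hcinc hxw hw.bruhatLe.tableauLe
  have hwz := hd.flabel_le_of_isChain hdinc hxz hz.bruhatLe.tableauLe
  rw [pairLe_iff] at hzw hwz
  obtain rfl := hxz.eq_of_flabel_eq hxw (toLex_inj.1 (le_antisymm hzw hwz))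
  rw [hz.eq_of_isChain hcinc.tail hw hdinc.tail]

end ELLabeling

theorem edelman_EL_labeling_general (n : ℕ) (x y : Fin n → ℕ)
    (hle : BruhatLe n x y) :
    ∃ c : List (Fin n → ℕ),
      (IsBruhatMaxChain n x y c ∧ (labels c).Chain' pairLe) ∧
      (∀ d, IsBruhatMaxChain n x y d ∧ (labels d).Chain' pairLe → d = c) ∧
      (∀ d, IsBruhatMaxChain n x y d → lexLe (labels c) (labels d)) := by
  obtain ⟨c, hc, hinc⟩ := exists_isBruhatMaxChain_isChain hle
  exact ⟨c, ⟨hc, hinc⟩, fun d hd => hd.1.eq_of_isChain hd.2 hc hinc,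
    fun d hd => hc.lexLe_labels_of_isChain hinc hd⟩

theorem edelman_EL_labeling (n : ℕ) (x y : Fin n → ℕ)
    (hx : IsPerm n x) (hy : IsPerm n y) (hle : BruhatLe n x y) :
    ∃ c : List (Fin n → ℕ),
      (IsBruhatMaxChain n x y c ∧ (labels c).Chain' pairLe) ∧
      (∀ d, IsBruhatMaxChain n x y d ∧ (labels d).Chain' pairLe → d = c) ∧
      (∀ d, IsBruhatMaxChain n x y d → lexLe (labels c) (labels d)) :=
  edelman_EL_labeling_general n x y hle
end

section
/- The symmetric group S_n is exactly the set of maximal-length elements of R_n under ℓ: an element x of R_n satisfies ℓ(x) = binomial(n+1,2) + inv(x) with all entries nonzero if and only if x is a permutation, and the Bruhat–Chevalley–Renner order on R_n restricted to S_n coincides with the strong Bruhat order on S_n. -/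
open Finset

variable {n : ℕ}

/-! A rook has entry sum at most `1 + ⋯ + n = (n + 1).choose 2`, with equality for permutations,
and raising an entry strictly increases the sum; so inside `R_n` no entry of a permutation can
be raised, and a chain of generating relations starting at a permutation consists of swaps only,
which keep it a permutation. -/

theorem sum_Icc_one_id (n : ℕ) : ∑ v ∈ Icc 1 n, v = (n + 1).choose 2 := by
  rw [Nat.choose_two_right, ← Finset.sum_range_id, Finset.range_eq_Ico,
    Finset.sum_eq_sum_Ico_succ_bot n.succ_pos, zero_add,
    Nat.succ_eq_add_one, Finset.Ico_add_one_right_eq_Icc]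

theorem IsPerm.isRook {a : Fin n → ℕ} (h : IsPerm n a) : IsRook n a :=
  ⟨fun i => (h.1 i).2, fun _ _ _ hij => h.2 hij⟩

theorem IsPerm.ne_zero {a : Fin n → ℕ} (h : IsPerm n a) (i : Fin n) : a i ≠ 0 :=
  Nat.one_le_iff_ne_zero.1 (h.1 i).1

theorem IsRook.isPerm_of_ne_zero {a : Fin n → ℕ} (h : IsRook n a) (hz : ∀ i, a i ≠ 0) :
    IsPerm n a :=
  ⟨fun i => ⟨Nat.one_le_iff_ne_zero.2 (hz i), h.1 i⟩, fun i j hij => h.2 i j (hz i) hij⟩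

theorem IsPerm.comp_equiv {a : Fin n → ℕ} (h : IsPerm n a) (e : Equiv.Perm (Fin n)) :
    IsPerm n (a ∘ e) :=
  ⟨fun i => h.1 (e i), h.2.comp e.injective⟩

theorem IsPerm.image_eq_Icc {a : Fin n → ℕ} (h : IsPerm n a) : univ.image a = Icc 1 n :=
  Finset.eq_of_subset_of_card_le
    (fun _ hv => by
      obtain ⟨i, -, rfl⟩ := Finset.mem_image.1 hv
      exact Finset.mem_Icc.2 (h.1 i))
    (by simp [Finset.card_image_of_injective _ h.2])

theorem IsPerm.sum_eq_choose {a : Fin n → ℕ} (h : IsPerm n a) :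
    ∑ i, a i = (n + 1).choose 2 := by
  rw [← sum_Icc_one_id, ← h.image_eq_Icc, Finset.sum_image fun _ _ _ _ hij => h.2 hij]

theorem IsRook.sum_le_choose {a : Fin n → ℕ} (h : IsRook n a) :
    ∑ i, a i ≤ (n + 1).choose 2 := by
  set support := univ.filter fun i => a i ≠ 0
  calc ∑ i, a i = ∑ i ∈ support, a i := (Finset.sum_filter_ne_zero _).symm
    _ = ∑ v ∈ support.image a, v :=
      (Finset.sum_image (f := id) fun i hi j _ hij => h.2 i j (Finset.mem_filter.1 hi).2 hij).symm
    _ ≤ ∑ v ∈ Icc 1 n, v := by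
      refine Finset.sum_le_sum_of_subset fun v hv => ?_
      obtain ⟨i, hi, rfl⟩ := Finset.mem_image.1 hv
      exact Finset.mem_Icc.2 ⟨Nat.one_le_iff_ne_zero.2 (Finset.mem_filter.1 hi).2, h.1 i⟩
    _ = (n + 1).choose 2 := sum_Icc_one_id n

theorem Step1.sum_lt {a b : Fin n → ℕ} (h : Step1 a b) : ∑ i, a i < ∑ i, b i := by
  obtain ⟨i, hi, hne⟩ := h
  refine Finset.sum_lt_sum (fun j _ => ?_) ⟨i, Finset.mem_univ i, hi⟩
  rcases eq_or_ne j i with rfl | hji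
  · exact hi.le
  · exact (hne j hji).le

theorem Step2.eq_comp_swap {a b : Fin n → ℕ} (h : Step2 a b) :
    ∃ i j, b = a ∘ Equiv.swap i j := by
  obtain ⟨i, j, -, -, hbi, hbj, hne⟩ := h
  refine ⟨i, j, funext fun k => ?_⟩
  rcases eq_or_ne k i with rfl | hki
  · simp [hbi]
  rcases eq_or_ne k j with rfl | hkj
  · simp [hbj]
  · simp [Equiv.swap_apply_of_ne_of_ne hki hkj, hne k hki hkj]

theorem IsPerm.not_step1 {a b : Fin n → ℕ} (ha : IsPerm n a) (hb : IsRook n b) :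
    ¬ Step1 a b := fun h => by
  have := h.sum_lt
  rw [ha.sum_eq_choose] at this
  exact this.not_ge hb.sum_le_choose

theorem IsPerm.isPerm_of_step2 {a b : Fin n → ℕ} (ha : IsPerm n a) (h : Step2 a b) :
    IsPerm n b := by
  obtain ⟨i, j, rfl⟩ := h.eq_comp_swap
  exact ha.comp_equiv _

theorem RookLe.isPerm_and_bruhatLe {a b : Fin n → ℕ} (h : RookLe n a b) (ha : IsPerm n a) :
    IsPerm n b ∧ BruhatLe n a b := by
  induction h with
  | refl => exact ⟨ha, .refl⟩
  | tail _ step ih =>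
    obtain ⟨hc, hab⟩ := ih
    obtain ⟨-, hd, step1 | step2⟩ := step
    · exact absurd step1 (hc.not_step1 hd)
    · have hd := hc.isPerm_of_step2 step2
      exact ⟨hd, hab.tail ⟨hc, hd, step2⟩⟩

theorem BruhatLe.rookLe {a b : Fin n → ℕ} (h : BruhatLe n a b) : RookLe n a b :=
  Relation.ReflTransGen.mono (fun _ _ hxy => ⟨hxy.1.isRook, hxy.2.1.isRook, .inr hxy.2.2⟩) _ _ h

theorem symmetric_group_in_rook_monoid (n : ℕ) :
    (∀ a : Fin n → ℕ, IsRook n a →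
      ((∀ i, a i ≠ 0) ↔ (IsPerm n a ∧ rlen a = Nat.choose (n + 1) 2 + rinv a))) ∧
    (∀ a b : Fin n → ℕ, IsPerm n a → IsPerm n b →
      (RookLe n a b ↔ BruhatLe n a b)) := by
  refine ⟨fun a ha => ⟨fun hz => ?_, fun ⟨hp, _⟩ => hp.ne_zero⟩,
    fun a b ha _ => ⟨fun h => (h.isPerm_and_bruhatLe ha).2, BruhatLe.rookLe⟩⟩
  have hp := ha.isPerm_of_ne_zero hz
  exact ⟨hp, by rw [rlen, hp.sum_eq_choose]⟩
end
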